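/- arXiv:1707.07798 — 12 statements merged into one kernel-verified Lean document; each statement's English description precedes it below -/
import Mathlib

section
/- For all integers a, b ≥ 0 and ν ≥ 3, the sequence W defined by W_1 = a+b, W_2 = (a+b)^2 + (2a+b), and W_ν = Σ_{k=1}^{ν} Σ_{j=0}^{k} a^j b^{k-j} C(k,j) C(ν+j-1, ν-k) satisfies the recurrence W_ν = (a+b+2) W_{ν-1} - (b+1) W_{ν-2}. -/
/-!
A part of size `n` comes in `a n + b` colours, so a single part has generating function
`f = X (1 - X)⁻¹ (a (1 - X)⁻¹ + b) = X (a + b (1 - X)) / (1 - X) ^ 2`. Expanding `f ^ k` binomially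
and using that `(1 - X) ^ (-d)` has coefficients `C(n + d - 1, n)` shows that the inner sum over `j`
is the coefficient of `X ^ ν` in `f ^ k`, so `W` is the coefficient sequence of `f / (1 - f)`.
Its denominator `(1 - X) ^ 2 (1 - f) = 1 - (a + b + 2) X + (b + 1) X ^ 2` gives the recurrence,
valid from `ν = 3` on because the numerator `(1 - X) ^ 2 f` has degree `2`. To stay with finite sums
we use the truncation `∑_{k ≤ N} f ^ k`, whose coefficients up to `X ^ N` are the same.
-/

open Finset PowerSeries

variable {R : Type*} [CommRing R]

noncomputable def colorSeries (a b : R) : R⟦X⟧ :=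
  X * PowerSeries.mk 1 * (C a * PowerSeries.mk 1 + C b)

def compositionCount (a b : R) (ν : ℕ) : R :=
  ∑ k ∈ Icc 1 ν, ∑ j ∈ range (k + 1),
    a ^ j * b ^ (k - j) * (k.choose j : R) * ((ν + j - 1).choose (ν - k) : R)

lemma coeff_mk_one_pow {d : ℕ} (hd : 0 < d) (n : ℕ) :
    coeff n ((PowerSeries.mk 1 : R⟦X⟧) ^ d) = ((n + d - 1).choose n : R) := by
  obtain ⟨d, rfl⟩ := Nat.exists_eq_add_one_of_ne_zero hd.ne'
  rw [mk_one_pow_eq_mk_choose_add, coeff_mk, show n + (d + 1) - 1 = d + n by omega,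
    Nat.choose_symm_add]

lemma colorSeries_pow (a b : R) (k : ℕ) :
    colorSeries a b ^ k = X ^ k *
      ∑ j ∈ range (k + 1), C (a ^ j * b ^ (k - j) * k.choose j) * PowerSeries.mk 1 ^ (k + j) := by
  rw [colorSeries, mul_pow, mul_pow, add_pow, mul_assoc, mul_sum]
  congr 1
  refine Finset.sum_congr rfl fun j _ => ?_
  simp only [mul_pow, ← map_pow, map_mul, map_natCast, pow_add]
  ring

lemma coeff_colorSeries_pow {a b : R} {k m : ℕ} (hk : 1 ≤ k) (hkm : k ≤ m) :
    coeff m (colorSeries a b ^ k) = ∑ j ∈ range (k + 1),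
      a ^ j * b ^ (k - j) * (k.choose j : R) * ((m + j - 1).choose (m - k) : R) := by
  rw [colorSeries_pow, coeff_X_pow_mul', if_pos hkm, map_sum]
  refine Finset.sum_congr rfl fun j _ => ?_
  rw [coeff_C_mul, coeff_mk_one_pow (by omega), show m - k + (k + j) - 1 = m + j - 1 by omega]

lemma coeff_colorSeries_pow_of_lt {a b : R} {k m : ℕ} (hmk : m < k) :
    coeff m (colorSeries a b ^ k) = 0 := by
  rw [colorSeries_pow, coeff_X_pow_mul', if_neg (by omega)]

lemma coeff_geom_sum_colorSeries (a b : R) {m N : ℕ} (hm : 1 ≤ m) (hmN : m ≤ N) :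
    coeff m (∑ k ∈ range (N + 1), colorSeries a b ^ k) = compositionCount a b m := by
  rw [map_sum, compositionCount]
  refine (sum_subset_zero_on_sdiff (fun k hk => ?_) (fun k hk => ?_) (fun k hk => ?_)).symm
  · simp only [mem_Icc, mem_range] at hk ⊢
    omega
  · simp only [mem_sdiff, mem_Icc, mem_range] at hk
    rcases Nat.eq_zero_or_pos k with rfl | hk0
    · simp only [pow_zero, coeff_one]
      exact if_neg (by omega)
    · exact coeff_colorSeries_pow_of_lt (by omega)
  · exact (coeff_colorSeries_pow (mem_Icc.1 hk).1 (mem_Icc.1 hk).2).symm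

lemma one_sub_X_sq_mul_one_sub_colorSeries (a b : R) :
    (1 - X) ^ 2 * (1 - colorSeries a b) = 1 - C (a + b + 2) * X + C (b + 1) * X ^ 2 := by
  have hu : (1 - X) * PowerSeries.mk 1 = (1 : R⟦X⟧) := by
    rw [mul_comm, mk_one_mul_one_sub_eq_one]
  have hf : (1 - X) ^ 2 * colorSeries a b = X * (C a + C b * (1 - X)) := by
    rw [colorSeries]
    linear_combination (X * C a * PowerSeries.mk 1 * (1 - X) + X * C b * (1 - X) + X * C a) * hu
  rw [mul_sub, hf, map_add, map_add, map_add, map_one, map_ofNat]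
  ring

lemma coeff_add_two_quadratic_mul (c d : R) (G : R⟦X⟧) (n : ℕ) :
    coeff (n + 2) ((1 - C c * X + C d * X ^ 2) * G) =
      coeff (n + 2) G - c * coeff (n + 1) G + d * coeff n G := by
  simp only [sub_mul, add_mul, one_mul, mul_assoc, map_add, map_sub, coeff_C_mul,
    coeff_succ_X_mul, coeff_X_pow_mul', le_add_iff_nonneg_left, zero_le, if_true,
    Nat.add_sub_cancel]

theorem compositionCount_recurrence (a b : R) (n : ℕ) :
    compositionCount a b (n + 3) =
      (a + b + 2) * compositionCount a b (n + 2) - (b + 1) * compositionCount a b (n + 1) := by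
  set G := ∑ k ∈ range (n + 4), colorSeries a b ^ k
  have hG : (1 - C (a + b + 2) * X + C (b + 1) * X ^ 2) * G =
      (1 - X) ^ 2 - (1 - X) ^ 2 * colorSeries a b ^ (n + 4) := by
    rw [← one_sub_X_sq_mul_one_sub_colorSeries, mul_assoc, mul_neg_geom_sum, mul_sub, mul_one]
  have h_tail : coeff (n + 3) ((1 - X) ^ 2 * colorSeries a b ^ (n + 4)) = 0 := by
    rw [colorSeries_pow, mul_left_comm, coeff_X_pow_mul', if_neg (by omega)]
  have h_numerator : coeff (n + 3) ((1 - X : R⟦X⟧) ^ 2) = 0 := by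
    simp [sq, sub_mul, mul_sub, coeff_one, coeff_X]
  have h := congrArg (coeff (n + 1 + 2)) hG
  rw [coeff_add_two_quadratic_mul, map_sub, h_tail, h_numerator,
    coeff_geom_sum_colorSeries a b (m := n + 1 + 2) (by omega) (by omega),
    coeff_geom_sum_colorSeries a b (m := n + 1 + 1) (by omega) (by omega),
    coeff_geom_sum_colorSeries a b (m := n + 1) (by omega) (by omega)] at h
  linear_combination h

lemma compositionCount_one (a b : R) : compositionCount a b 1 = a + b := by
  simp only [compositionCount, Icc_self, sum_singleton, sum_range_succ, range_one]
  norm_num [add_comm]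

lemma compositionCount_two (a b : R) :
    compositionCount a b 2 = (a + b) ^ 2 + (2 * a + b) := by
  rw [compositionCount, show Icc 1 2 = {1, 2} by rfl, sum_pair (by norm_num)]
  simp only [sum_range_succ, range_one, sum_singleton]
  norm_num
  ring

/-- The sequence `W`, counting `(an+b)`-color compositions of `ν`, given by the
initial values `W 1 = a+b`, `W 2 = (a+b)^2 + (2a+b)` and by the explicit double-sum
formula for `ν ≥ 3`, satisfies the recurrence
`W ν = (a+b+2) W (ν-1) - (b+1) W (ν-2)` for `ν ≥ 3`. -/
theorem colored_comp_recurrence (a b : ℕ) (W : ℕ → ℤ)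
    (h1 : W 1 = (a : ℤ) + b)
    (h2 : W 2 = ((a : ℤ) + b) ^ 2 + (2 * a + b))
    (hW : ∀ ν, 3 ≤ ν → W ν =
      ∑ k ∈ Finset.Icc 1 ν, ∑ j ∈ Finset.range (k + 1),
        (a : ℤ) ^ j * (b : ℤ) ^ (k - j) * (Nat.choose k j) *
          (Nat.choose (ν + j - 1) (ν - k)))
    (ν : ℕ) (hν : 3 ≤ ν) :
    W ν = ((a : ℤ) + b + 2) * W (ν - 1) - ((b : ℤ) + 1) * W (ν - 2) := by
  have hW_eq : ∀ m, 1 ≤ m → W m = compositionCount (a : ℤ) b m := by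
    intro m hm
    rcases (show m = 1 ∨ m = 2 ∨ 3 ≤ m by omega) with rfl | rfl | hm3
    · rw [h1, compositionCount_one]
    · rw [h2, compositionCount_two]
    · exact hW m hm3
  obtain ⟨n, rfl⟩ : ∃ n, ν = n + 3 := ⟨ν - 3, by omega⟩
  rw [show n + 3 - 1 = n + 2 by omega, show n + 3 - 2 = n + 1 by omega,
    hW_eq _ (by omega), hW_eq _ (by omega), hW_eq _ (by omega)]
  exact compositionCount_recurrence _ _ n
end

section
/- For sequences x = (x_n) and y = (y_n) of integers, scalars a, b ∈ ℤ, and n, k ≥ 0, the composition-count functions satisfy c_{n,k}(a·x + b·y) = Σ_{m=0}^{n} Σ_{j=0}^{k} C(k,j) a^j b^{k-j} c_{m,j}(x) c_{n-m,k-j}(y), where a·x + b·y denotes the sequence (a x_n + b y_n). -/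
open Finset

/-- `colorCompCount w n k = c_{n,k}(w)`: the sum over all `(k₁,…,kₙ)` with
`Σ i·kᵢ = n` and `Σ kᵢ = k` of the multinomial `k!/(k₁!⋯kₙ!)` times
`w₁^{k₁} ⋯ wₙ^{kₙ}`.  (Each `kᵢ ≤ k`, so we may range over `Fin n → Fin (k+1)`.) -/
def colorCompCount (w : ℕ → ℤ) (n k : ℕ) : ℤ :=
  ∑ f ∈ Finset.univ.filter (fun f : Fin n → Fin (k + 1) =>
      (∑ i : Fin n, ((i : ℕ) + 1) * (f i : ℕ)) = n ∧ (∑ i : Fin n, (f i : ℕ)) = k),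
    (Nat.multinomial Finset.univ (fun i => (f i : ℕ)) : ℤ) *
      ∏ i : Fin n, w ((i : ℕ) + 1) ^ (f i : ℕ)

lemma multinomial_subset {s t : Finset ℕ} (h : s ⊆ t) (g : ℕ → ℕ)
    (hg : ∀ i ∈ t, i ∉ s → g i = 0) :
    Nat.multinomial t g = Nat.multinomial s g := by
  have hsum : ∑ i ∈ t, g i = ∑ i ∈ s, g i := (Finset.sum_subset h (fun i hi his => hg i hi his)).symm
  have hprod : ∏ i ∈ t, (g i).factorial = ∏ i ∈ s, (g i).factorial :=
    (Finset.prod_subset h (fun i hi his => by rw [hg i hi his, Nat.factorial_zero])).symm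
  have := Nat.multinomial_spec t g
  rw [hsum, hprod, ← Nat.multinomial_spec s g] at this
  exact Nat.eq_of_mul_eq_mul_left (Finset.prod_pos fun i _ => Nat.factorial_pos _) this

lemma multinomial_range_fin (n : ℕ) (g : ℕ → ℕ) :
    Nat.multinomial (Finset.range n) g
      = Nat.multinomial (Finset.univ : Finset (Fin n)) (fun i => g i) := by
  unfold Nat.multinomial
  rw [← Fin.sum_univ_eq_sum_range (fun i => g i), ← Fin.prod_univ_eq_prod_range (fun i => (g i).factorial)]

lemma coeff_pow_eq (w : ℕ → ℤ) (N n k : ℕ) (hn : n ≤ N) :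
    ((∑ i ∈ Finset.range N, Polynomial.C (w (i + 1)) * Polynomial.X ^ (i + 1)) ^ k).coeff n
      = colorCompCount w n k := by
  rw [Finset.sum_pow_eq_sum_piAntidiag]
  have hterm : ∀ g : ℕ → ℕ,
      (Nat.multinomial (Finset.range N) g : Polynomial ℤ) *
        ∏ i ∈ Finset.range N, (Polynomial.C (w (i + 1)) * Polynomial.X ^ (i + 1)) ^ g i
      = Polynomial.C ((Nat.multinomial (Finset.range N) g : ℤ) *
          ∏ i ∈ Finset.range N, w (i + 1) ^ g i) *
          Polynomial.X ^ (∑ i ∈ Finset.range N, (i + 1) * g i) := by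
    intro g
    rw [Finset.prod_congr rfl (fun i _ => by rw [mul_pow, ← Polynomial.C_pow, ← pow_mul]),
      Finset.prod_mul_distrib, Finset.prod_pow_eq_pow_sum, map_mul, Polynomial.C_eq_natCast,
      map_prod]
    ring
  rw [Finset.sum_congr rfl (fun g _ => hterm g), Polynomial.finset_sum_coeff]
  simp only [Polynomial.coeff_C_mul, Polynomial.coeff_X_pow, mul_ite, mul_one, mul_zero]
  rw [← Finset.sum_filter]
  have hle : ∀ g ∈ (Finset.piAntidiag (Finset.range N) k).filter
      (fun g => n = ∑ i ∈ Finset.range N, (i + 1) * g i), ∀ i, g i ≤ k := by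
    intro g hg i
    rw [Finset.mem_filter, Finset.mem_piAntidiag] at hg
    by_cases hi : i ∈ Finset.range N
    · exact hg.1.1 ▸ Finset.single_le_sum (fun _ _ => Nat.zero_le _) hi
    · rw [not_imp_comm.1 (hg.1.2 i) hi]; exact Nat.zero_le _
  have hzero : ∀ g ∈ (Finset.piAntidiag (Finset.range N) k).filter
      (fun g => n = ∑ i ∈ Finset.range N, (i + 1) * g i), ∀ i, n ≤ i → g i = 0 := by
    intro g hg i hni
    rw [Finset.mem_filter, Finset.mem_piAntidiag] at hg
    by_cases hi : i ∈ Finset.range N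
    · by_contra h
      have h1 : i + 1 ≤ (i + 1) * g i := Nat.le_mul_of_pos_right _ (Nat.pos_of_ne_zero h)
      have h2 : (i + 1) * g i ≤ n := hg.2 ▸ Finset.single_le_sum
        (f := fun i => (i + 1) * g i) (fun _ _ => Nat.zero_le _) hi
      omega
    · exact not_imp_comm.1 (hg.1.2 i) hi
  refine Finset.sum_bij' (i := fun g hg => fun i : Fin n =>
      (⟨g i, Nat.lt_succ_of_le (hle g hg i)⟩ : Fin (k + 1)))
    (j := fun f _ => fun i : ℕ => if h : i < n then (f ⟨i, h⟩ : ℕ) else 0)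
    ?_ ?_ ?_ ?_ ?_
  · intro g hg
    have h1 : ∑ i ∈ Finset.range n, (i + 1) * g i = ∑ i ∈ Finset.range N, (i + 1) * g i :=
      Finset.sum_subset (Finset.range_subset_range.2 hn) (fun i _ hin => by
        rw [hzero g hg i (by simpa using hin), mul_zero])
    have h2 : ∑ i ∈ Finset.range n, g i = ∑ i ∈ Finset.range N, g i :=
      Finset.sum_subset (Finset.range_subset_range.2 hn) (fun i _ hin =>
        hzero g hg i (by simpa using hin))
    rw [Finset.mem_filter, Finset.mem_piAntidiag] at hg
    simp only [Finset.mem_filter, Finset.mem_univ, true_and]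
    constructor
    · rw [Fin.sum_univ_eq_sum_range (fun i => (i + 1) * g i), h1]
      exact hg.2.symm
    · rw [Fin.sum_univ_eq_sum_range (fun i => g i), h2]
      exact hg.1.1
  · intro f hf
    simp only [Finset.mem_filter, Finset.mem_univ, true_and] at hf
    have h1 : ∀ i ∈ Finset.range N, i ∉ Finset.range n →
        (if h : i < n then (f ⟨i, h⟩ : ℕ) else 0) = 0 := by
      intro i _ hin
      rw [dif_neg (by simpa using hin)]
    have hfin : ∀ (F : ℕ → ℕ) , (∀ i ∈ Finset.range n, F i = (fun i : ℕ =>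
        if h : i < n then (f ⟨i, h⟩ : ℕ) else 0) i) → True := fun _ _ => trivial
    rw [Finset.mem_filter, Finset.mem_piAntidiag]
    refine ⟨⟨?_, ?_⟩, ?_⟩
    · rw [← Finset.sum_subset (Finset.range_subset_range.2 hn) h1,
        ← Fin.sum_univ_eq_sum_range (fun i => if h : i < n then (f ⟨i, h⟩ : ℕ) else 0)]
      simpa using hf.2
    · intro i hi
      beta_reduce at hi
      by_contra hiN
      exact hi (by
        rw [dif_neg]
        intro hilt
        exact hiN (Finset.mem_range.2 (lt_of_lt_of_le hilt hn)))
    · beta_reduce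
      rw [← Finset.sum_subset (Finset.range_subset_range.2 hn) (fun i hi hin => by
          beta_reduce
          rw [h1 i hi hin, mul_zero]),
        ← Fin.sum_univ_eq_sum_range (fun i => (i + 1) * if h : i < n then (f ⟨i, h⟩ : ℕ) else 0)]
      simp only [Fin.is_lt, dif_pos, Fin.eta]
      exact hf.1.symm
  · intro g hg
    funext i
    beta_reduce
    by_cases h : i < n
    · simp [h]
    · rw [dif_neg h, hzero g hg i (Nat.le_of_not_lt h)]
  · intro f hf
    funext i
    apply Fin.ext
    simp
  · intro g hg
    have hC : Nat.multinomial (Finset.range N) g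
        = Nat.multinomial (Finset.univ : Finset (Fin n)) (fun i => g i) := by
      rw [multinomial_subset (Finset.range_subset_range.2 hn) g (fun i _ hin =>
        hzero g hg i (by simpa using hin)), multinomial_range_fin]
    have hP : ∏ i ∈ Finset.range N, w (i + 1) ^ g i = ∏ i : Fin n, w ((i : ℕ) + 1) ^ g i := by
      rw [← Finset.prod_subset (Finset.range_subset_range.2 hn) (fun i _ hin => by
          rw [hzero g hg i (by simpa using hin), pow_zero]),
        ← Fin.prod_univ_eq_prod_range (fun i => w (i + 1) ^ g i)]
    rw [hC, hP]

/-- For sequences `x, y` of nonnegative integers and `a, b ∈ ℤ`,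
`c_{n,k}(ax+by) = Σ_{m=0}^{n} Σ_{j=0}^{k} C(k,j) aʲ b^{k-j} c_{m,j}(x) c_{n-m,k-j}(y)`. -/
theorem colorCompCount_linear_comb (a b : ℤ) (x y : ℕ → ℤ)
    (hx : ∀ m, 0 ≤ x m) (hy : ∀ m, 0 ≤ y m) (n k : ℕ) :
    colorCompCount (fun m => a * x m + b * y m) n k =
      ∑ m ∈ Finset.range (n + 1), ∑ j ∈ Finset.range (k + 1),
        (Nat.choose k j : ℤ) * a ^ j * b ^ (k - j) *
          colorCompCount x m j * colorCompCount y (n - m) (k - j) := by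

  set P : Polynomial ℤ := ∑ i ∈ Finset.range n, Polynomial.C (x (i + 1)) * Polynomial.X ^ (i + 1)
    with hP
  set Q : Polynomial ℤ := ∑ i ∈ Finset.range n, Polynomial.C (y (i + 1)) * Polynomial.X ^ (i + 1)
    with hQ
  have hPQ : ∑ i ∈ Finset.range n, Polynomial.C (a * x (i + 1) + b * y (i + 1))
      * Polynomial.X ^ (i + 1) = Polynomial.C a * P + Polynomial.C b * Q := by
    rw [hP, hQ, Finset.mul_sum, Finset.mul_sum, ← Finset.sum_add_distrib]
    refine Finset.sum_congr rfl fun i _ => ?_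
    rw [map_add, map_mul, map_mul]
    ring
  rw [← coeff_pow_eq (fun m => a * x m + b * y m) n n k le_rfl]
  beta_reduce
  rw [hPQ, add_pow, Polynomial.finset_sum_coeff, Finset.sum_comm]
  refine Finset.sum_congr rfl fun j hj => ?_
  have h1 : (Polynomial.C a * P) ^ j * (Polynomial.C b * Q) ^ (k - j)
      * ((k.choose j : ℕ) : Polynomial ℤ)
      = Polynomial.C (a ^ j * b ^ (k - j) * (k.choose j : ℤ)) * (P ^ j * Q ^ (k - j)) := by
    rw [mul_pow, mul_pow, ← Polynomial.C_pow, ← Polynomial.C_pow, ← Polynomial.C_eq_natCast,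
      Polynomial.C_mul, Polynomial.C_mul]
    ring
  rw [h1, Polynomial.coeff_C_mul, Polynomial.coeff_mul,
    Finset.Nat.sum_antidiagonal_eq_sum_range_succ_mk, Finset.mul_sum]
  refine Finset.sum_congr rfl fun m hm => ?_
  have hm' : m ≤ n := Nat.lt_succ_iff.1 (Finset.mem_range.1 hm)
  rw [coeff_pow_eq x n m j hm', coeff_pow_eq y n (n - m) (k - j) (Nat.sub_le n m)]
  ring
end

section
/- For integers a, b ≥ 0 and n ≥ k ≥ 1 and 0 ≤ j ≤ k, the number of n-domino compositions in T^{a,b}_j(n,k) equals a^j b^{k-j} C(k,j) C(n+j-1, n-k). -/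
open Finset

lemma card_finset_sum {ι α : Type*} (s : Finset ι) (g : ι → Multiset α) :
    Multiset.card (∑ i ∈ s, g i) = ∑ i ∈ s, Multiset.card (g i) := by
  classical
  induction s using Finset.cons_induction with
  | empty => simp
  | cons a s ha ih => simp [Finset.sum_cons, ih]

/-- Stars and bars: tuples of naturals with fixed sum correspond to multisets. -/
def sumTupleEquivSym (ι : Type*) [Fintype ι] [DecidableEq ι] (m : ℕ) :
    {f : ι → ℕ // ∑ i, f i = m} ≃ Sym ι m where
  toFun f := ⟨∑ i, Multiset.replicate (f.1 i) i, by
    rw [card_finset_sum]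
    simp [f.2]⟩
  invFun s := ⟨fun i => s.1.count i, by
    show ∑ i : ι, s.1.count i = m
    rw [← Finset.sum_subset (Finset.subset_univ s.1.toFinset)
      (by intro x _ hx; simpa using hx)]
    rw [Multiset.toFinset_sum_count_eq s.1, s.2]⟩
  left_inv f := by
    ext i
    simp only
    rw [Multiset.count_sum']
    simp [Multiset.count_replicate, eq_comm]
  right_inv s := by
    ext1
    simp only
    show ∑ i : ι, Multiset.replicate (s.1.count i) i = s.1
    rw [← Finset.sum_subset (Finset.subset_univ s.1.toFinset)
      (by intro x _ hx; simp at hx; simp [hx])]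
    calc ∑ i ∈ s.1.toFinset, Multiset.replicate (s.1.count i) i
        = ∑ i ∈ s.1.toFinset, s.1.count i • {i} :=
          Finset.sum_congr rfl fun x _ => (Multiset.nsmul_singleton x _).symm
      _ = s.1 := Multiset.toFinset_sum_count_nsmul_eq s.1

lemma card_sum_tuple (ι : Type*) [Fintype ι] [DecidableEq ι] (m : ℕ) :
    Nat.card {f : ι → ℕ // ∑ i, f i = m} = (Fintype.card ι + m - 1).choose m := by
  rw [Nat.card_congr (sumTupleEquivSym ι m), Nat.card_eq_fintype_card,
    Sym.card_sym_eq_choose]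

/-- The fiber of domino compositions whose set of nonzero dominos is a given `S`. -/
def dominoFiberEquiv (a b n k j : ℕ) (hk : 1 ≤ k) (hn : k ≤ n)
    (S : Finset (Fin k)) (hS : S.card = j) :
    {f : {f : Fin k → ℕ × ℕ × ℕ //
        (∀ t, 1 ≤ (f t).1 ∧ (f t).1 ≤ n ∧ (f t).2.1 ≤ n) ∧
        (Finset.univ.filter (fun t => (f t).2.1 ≠ 0)).card = j ∧
        (∑ t, ((f t).1 + (f t).2.1)) = n + j ∧
        (∀ t, (f t).2.1 ≠ 0 → 1 ≤ (f t).2.2 ∧ (f t).2.2 ≤ a) ∧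
        (∀ t, (f t).2.1 = 0 → 1 ≤ (f t).2.2 ∧ (f t).2.2 ≤ b)} //
      Finset.univ.filter (fun t => (f.1 t).2.1 ≠ 0) = S} ≃
    ({v : Fin k ⊕ {x // x ∈ S} → ℕ // ∑ i, v i = n - k} ×
      (∀ t : Fin k, Fin (if t ∈ S then a else b))) where
  toFun p :=
    ⟨⟨Sum.elim (fun t => (p.1.1 t).1 - 1) (fun t => (p.1.1 t.1).2.1 - 1), by
      obtain ⟨⟨f, h1, h2, h3, h4, h5⟩, hfS⟩ := p
      have hmem : ∀ t, t ∈ S ↔ (f t).2.1 ≠ 0 := by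
        intro t; rw [← hfS]; simp
      have hA : ∑ t, ((f t).1 - 1) = (∑ t, (f t).1) - ∑ _t : Fin k, 1 :=
        Finset.sum_tsub_distrib _ (fun t _ => (h1 t).1)
      have hAk : (∑ _t : Fin k, 1) ≤ ∑ t, (f t).1 :=
        Finset.sum_le_sum fun t _ => (h1 t).1
      have hBsub : ∑ t ∈ S, (f t).2.1 = ∑ t, (f t).2.1 :=
        Finset.sum_subset (Finset.subset_univ S)
          (fun t _ ht => by
            by_contra hc
            exact ht ((hmem t).2 hc))
      have hB : ∑ t ∈ S, ((f t).2.1 - 1) = (∑ t ∈ S, (f t).2.1) - ∑ _t ∈ S, 1 :=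
        Finset.sum_tsub_distrib _
          (fun t ht => Nat.one_le_iff_ne_zero.2 ((hmem t).1 ht))
      have hBj : (∑ _t ∈ S, 1) ≤ ∑ t ∈ S, (f t).2.1 :=
        Finset.sum_le_sum fun t ht => Nat.one_le_iff_ne_zero.2 ((hmem t).1 ht)
      have hAB : (∑ t, (f t).1) + ∑ t, (f t).2.1 = n + j := by
        rw [← Finset.sum_add_distrib]; exact h3
      have h1' : ∑ _t : Fin k, 1 = k := by simp
      have hS' : ∑ _t ∈ S, 1 = j := by simp [hS]
      rw [Fintype.sum_sum_type]
      simp only [Sum.elim_inl, Sum.elim_inr]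
      rw [Finset.sum_coe_sort S (fun t => (f t).2.1 - 1)]
      rw [hA, hB]
      omega⟩,
     fun t => ⟨(p.1.1 t).2.2 - 1, by
      obtain ⟨⟨f, h1, h2, h3, h4, h5⟩, hfS⟩ := p
      have hmem : ∀ t, t ∈ S ↔ (f t).2.1 ≠ 0 := by
        intro t; rw [← hfS]; simp
      by_cases h : t ∈ S
      · have := h4 t ((hmem t).1 h)
        simp only [if_pos h]
        omega
      · have hz : (f t).2.1 = 0 := by
          by_contra hc; exact h ((hmem t).2 hc)
        have := h5 t hz
        simp only [if_neg h]
        omega⟩⟩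
  invFun q :=
    ⟨⟨fun t => (q.1.1 (Sum.inl t) + 1,
        if h : t ∈ S then q.1.1 (Sum.inr ⟨t, h⟩) + 1 else 0,
        (q.2 t).1 + 1), by
      obtain ⟨⟨v, hv⟩, c⟩ := q
      have hvle : ∀ i, v i ≤ n - k := fun i => by
        rw [← hv]
        exact Finset.single_le_sum (fun i _ => Nat.zero_le (v i)) (Finset.mem_univ i)
      have hfil : Finset.univ.filter
          (fun t => (if h : t ∈ S then v (Sum.inr ⟨t, h⟩) + 1 else 0) ≠ 0) = S := by
        ext t
        by_cases h : t ∈ S <;> simp [h]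
      refine ⟨fun t => ⟨Nat.le_add_left 1 _, ?_, ?_⟩, ?_, ?_, ?_, ?_⟩
      · show v (Sum.inl t) + 1 ≤ n
        have := hvle (Sum.inl t); omega
      · show (if h : t ∈ S then v (Sum.inr ⟨t, h⟩) + 1 else 0) ≤ n
        by_cases h : t ∈ S
        · rw [dif_pos h]; have := hvle (Sum.inr ⟨t, h⟩); omega
        · rw [dif_neg h]; omega
      · show (Finset.univ.filter
          (fun t => (if h : t ∈ S then v (Sum.inr ⟨t, h⟩) + 1 else 0) ≠ 0)).card = j
        rw [hfil, hS]
      · show ∑ t : Fin k, ((v (Sum.inl t) + 1) +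
          (if h : t ∈ S then v (Sum.inr ⟨t, h⟩) + 1 else 0)) = n + j
        have hsum1 : ∑ t : Fin k, (v (Sum.inl t) + 1) = (∑ t : Fin k, v (Sum.inl t)) + k := by
          rw [Finset.sum_add_distrib]; simp
        have hsum2 : ∑ t : Fin k, (if h : t ∈ S then v (Sum.inr ⟨t, h⟩) + 1 else 0)
            = (∑ i : {x // x ∈ S}, v (Sum.inr i)) + j := by
          rw [← Finset.sum_subset (Finset.subset_univ S) (fun t _ ht => dif_neg ht)]
          rw [← Finset.sum_attach S
            (fun t => if h : t ∈ S then v (Sum.inr ⟨t, h⟩) + 1 else 0)]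
          rw [Finset.sum_congr rfl (fun t _ => dif_pos t.2)]
          rw [Finset.sum_add_distrib]
          exact congrArg₂ (· + ·) (by rw [Finset.attach_eq_univ]) (by simp [hS])
        have hvsum : (∑ t : Fin k, v (Sum.inl t)) + ∑ i : {x // x ∈ S}, v (Sum.inr i) = n - k := by
          rw [← Fintype.sum_sum_type]; exact hv
        rw [Finset.sum_add_distrib, hsum1, hsum2]
        omega
      · intro t hne
        show 1 ≤ (c t).1 + 1 ∧ (c t).1 + 1 ≤ a
        have hne' : (if h : t ∈ S then v (Sum.inr ⟨t, h⟩) + 1 else 0) ≠ 0 := hne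
        have ht : t ∈ S := by
          by_contra h
          exact hne' (dif_neg h)
        have hlt := lt_of_lt_of_eq (c t).2 (if_pos ht)
        omega
      · intro t hz
        show 1 ≤ (c t).1 + 1 ∧ (c t).1 + 1 ≤ b
        have hz' : (if h : t ∈ S then v (Sum.inr ⟨t, h⟩) + 1 else 0) = 0 := hz
        have ht : t ∉ S := by
          intro h
          rw [dif_pos h] at hz'
          omega
        have hlt := lt_of_lt_of_eq (c t).2 (if_neg ht)
        omega⟩, by
      obtain ⟨⟨v, hv⟩, c⟩ := q
      show Finset.univ.filter
          (fun t => (if h : t ∈ S then v (Sum.inr ⟨t, h⟩) + 1 else 0) ≠ 0) = S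
      ext t
      by_cases h : t ∈ S <;> simp [h]⟩
  left_inv p := by
    obtain ⟨⟨f, h1, h2, h3, h4, h5⟩, hfS⟩ := p
    have hmem : ∀ t, t ∈ S ↔ (f t).2.1 ≠ 0 := by
      intro t; rw [← hfS]; simp
    apply Subtype.ext
    apply Subtype.ext
    funext t
    refine Prod.ext ?_ (Prod.ext ?_ ?_)
    · show (f t).1 - 1 + 1 = (f t).1
      have := (h1 t).1; omega
    · show (if h : t ∈ S then (f t).2.1 - 1 + 1 else 0) = (f t).2.1
      by_cases h : t ∈ S
      · have hne := (hmem t).1 h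
        rw [dif_pos h]; omega
      · have hz : (f t).2.1 = 0 := by by_contra hc; exact h ((hmem t).2 hc)
        rw [dif_neg h, hz]
    · show (f t).2.2 - 1 + 1 = (f t).2.2
      by_cases h : (f t).2.1 = 0
      · have := h5 t h; omega
      · have := h4 t h; omega
  right_inv q := by
    obtain ⟨⟨v, hv⟩, c⟩ := q
    refine Prod.ext (Subtype.ext ?_) ?_
    · funext i
      rcases i with t | t
      · show v (Sum.inl t) + 1 - 1 = v (Sum.inl t)
        omega
      · show (if h : t.1 ∈ S then v (Sum.inr ⟨t.1, h⟩) + 1 else 0) - 1 = v (Sum.inr t)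
        rw [dif_pos t.2]
        simp
    · funext t
      apply Fin.ext
      show (c t).1 + 1 - 1 = (c t).1
      omega

/-- The number of colored `n`-domino compositions in `T^{a,b}_j(n,k)`: `k`-tuples of
colored `n`-dominos `(α, β, γ)` with `0 < α ≤ n`, `0 ≤ β ≤ n`, exactly `j` of which
are nonzero (`β ≠ 0`, color `γ ∈ {1,…,a}`) and `k-j` of which are zero (`β = 0`,
color `γ ∈ {1,…,b}`), with total sum `Σ (α + β) = n + j`, equals
`aʲ b^{k-j} C(k,j) C(n+j-1, n-k)`. -/
theorem card_domino_compositions (a b n k j : ℕ) (hk : 1 ≤ k) (hn : k ≤ n)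
    (hj : j ≤ k) :
    Nat.card {f : Fin k → ℕ × ℕ × ℕ //
        (∀ t, 1 ≤ (f t).1 ∧ (f t).1 ≤ n ∧ (f t).2.1 ≤ n) ∧
        (Finset.univ.filter (fun t => (f t).2.1 ≠ 0)).card = j ∧
        (∑ t, ((f t).1 + (f t).2.1)) = n + j ∧
        (∀ t, (f t).2.1 ≠ 0 → 1 ≤ (f t).2.2 ∧ (f t).2.2 ≤ a) ∧
        (∀ t, (f t).2.1 = 0 → 1 ≤ (f t).2.2 ∧ (f t).2.2 ≤ b)} =
      a ^ j * b ^ (k - j) * Nat.choose k j * Nat.choose (n + j - 1) (n - k) := by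
  have e : {f : Fin k → ℕ × ℕ × ℕ //
        (∀ t, 1 ≤ (f t).1 ∧ (f t).1 ≤ n ∧ (f t).2.1 ≤ n) ∧
        (Finset.univ.filter (fun t => (f t).2.1 ≠ 0)).card = j ∧
        (∑ t, ((f t).1 + (f t).2.1)) = n + j ∧
        (∀ t, (f t).2.1 ≠ 0 → 1 ≤ (f t).2.2 ∧ (f t).2.2 ≤ a) ∧
        (∀ t, (f t).2.1 = 0 → 1 ≤ (f t).2.2 ∧ (f t).2.2 ≤ b)} ≃
      Σ S₀ : {S : Finset (Fin k) // S.card = j},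
        (Sym (Fin k ⊕ {x // x ∈ S₀.1}) (n - k) ×
          (∀ t : Fin k, Fin (if t ∈ S₀.1 then a else b))) :=
    (Equiv.sigmaFiberEquiv (fun f => (⟨Finset.univ.filter (fun t => (f.1 t).2.1 ≠ 0),
        f.2.2.1⟩ : {S : Finset (Fin k) // S.card = j}))).symm.trans
      (Equiv.sigmaCongrRight fun S₀ =>
        ((Equiv.subtypeEquivRight fun f => Subtype.ext_iff).trans
          (dominoFiberEquiv a b n k j hk hn S₀.1 S₀.2)).trans
          (Equiv.prodCongr (sumTupleEquivSym _ _) (Equiv.refl _)))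
  rw [Nat.card_congr e, Nat.card_eq_fintype_card, Fintype.card_sigma]
  have hterm : ∀ S₀ : {S : Finset (Fin k) // S.card = j},
      Fintype.card (Sym (Fin k ⊕ {x // x ∈ S₀.1}) (n - k) ×
          (∀ t : Fin k, Fin (if t ∈ S₀.1 then a else b)))
        = a ^ j * b ^ (k - j) * (n + j - 1).choose (n - k) := by
    intro S₀
    rw [Fintype.card_prod, Sym.card_sym_eq_choose, Fintype.card_pi]
    have h1 : Fintype.card (Fin k ⊕ {x // x ∈ S₀.1}) = k + j := by
      simp [S₀.2]
    have h2 : (∏ t : Fin k, Fintype.card (Fin (if t ∈ S₀.1 then a else b)))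
        = a ^ j * b ^ (k - j) := by
      simp only [Fintype.card_fin]
      rw [Finset.prod_ite (fun _ => a) (fun _ => b), Finset.prod_const, Finset.prod_const]
      have hp : (Finset.univ.filter (fun t => t ∈ S₀.1)).card = j := by
        rw [Finset.filter_univ_mem, S₀.2]
      have hq : (Finset.univ.filter (fun t => ¬ t ∈ S₀.1)).card = k - j := by
        have := Finset.card_filter_add_card_filter_not
          (s := (Finset.univ : Finset (Fin k))) (p := fun t => t ∈ S₀.1)
        simp only [Finset.card_univ, Fintype.card_fin] at this
        omega
      rw [hp, hq]
    rw [h1, h2]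
    have harith : k + j + (n - k) - 1 = n + j - 1 := by omega
    rw [harith]
    ring
  rw [Finset.sum_congr rfl (fun S₀ _ => hterm S₀), Finset.sum_const, Finset.card_univ,
    Fintype.card_finset_len, Fintype.card_fin, smul_eq_mul]
  ring
end

section
/- For integers a, b ≥ 0, ν ≥ 1, k ≥ 1, there is a bijection between the set T^{a,b}(ν,k) = ⋃_{j=0}^{k} T^{a,b}_j(ν,k) of colored ν-domino compositions and the set of (aν+b)-color compositions of ν with k parts (i.e., k-tuples ((i_1,ℓ_1),…,(i_k,ℓ_k)) with Σ i_t = ν, i_t ≥ 1, and 1 ≤ ℓ_t ≤ a·i_t + b). -/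
open Finset

/-- Forward map: colored domino `(α, β, γ)` to colored part `(i, ℓ)`. -/
def dominoFwd (a : ℕ) (p : ℕ × ℕ × ℕ) : ℕ × ℕ :=
  if p.2.1 ≠ 0 then (p.1 + p.2.1 - 1, (p.2.2 - 1) * (p.1 + p.2.1 - 1) + p.2.1)
  else (p.1, a * p.1 + p.2.2)

/-- Backward map: colored part `(i, ℓ)` to colored domino `(α, β, γ)`. -/
def dominoBwd (a : ℕ) (p : ℕ × ℕ) : ℕ × ℕ × ℕ :=
  if p.2 ≤ a * p.1 then
    (p.1 - (p.2 - (p.2 - 1) / p.1 * p.1) + 1, p.2 - (p.2 - 1) / p.1 * p.1, (p.2 - 1) / p.1 + 1)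
  else (p.1, 0, p.2 - a * p.1)

lemma dominoBwd_spec (a b : ℕ) (p : ℕ × ℕ) (h1 : 1 ≤ p.1) (h2 : 1 ≤ p.2)
    (h3 : p.2 ≤ a * p.1 + b) :
    1 ≤ (dominoBwd a p).1 ∧ (dominoBwd a p).1 ≤ p.1 ∧ (dominoBwd a p).2.1 ≤ p.1 ∧
    (dominoBwd a p).1 + (dominoBwd a p).2.1
      = p.1 + (if (dominoBwd a p).2.1 ≠ 0 then 1 else 0) ∧
    ((dominoBwd a p).2.1 ≠ 0 → 1 ≤ (dominoBwd a p).2.2 ∧ (dominoBwd a p).2.2 ≤ a) ∧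
    ((dominoBwd a p).2.1 = 0 → 1 ≤ (dominoBwd a p).2.2 ∧ (dominoBwd a p).2.2 ≤ b) ∧
    dominoFwd a (dominoBwd a p) = p := by
  obtain ⟨i, ℓ⟩ := p
  simp only at h1 h2 h3
  by_cases hc : ℓ ≤ a * i
  · simp only [dominoBwd, if_pos hc]
    try dsimp only
    have hmod : (ℓ - 1) % i < i := Nat.mod_lt _ h1
    have hdiv : (ℓ - 1) / i * i + (ℓ - 1) % i = ℓ - 1 := by
      rw [mul_comm]; exact Nat.div_add_mod _ _
    have hqa : (ℓ - 1) / i < a := Nat.div_lt_of_lt_mul (by rw [mul_comm]; omega)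
    obtain ⟨q, hq⟩ : ∃ q, (ℓ - 1) / i = q := ⟨_, rfl⟩
    rw [hq] at hdiv hqa ⊢
    obtain ⟨r, hrd⟩ : ∃ r, ℓ - q * i = r := ⟨_, rfl⟩
    rw [hrd]
    have hr1 : 1 ≤ r := by omega
    have hri : r ≤ i := by omega
    have hrne : r ≠ 0 := by omega
    refine ⟨by omega, by omega, by omega, by rw [if_pos hrne]; omega,
      fun _ => ⟨by omega, by omega⟩, fun h => absurd h hrne, ?_⟩
    simp only [dominoFwd]
    rw [if_pos hrne]
    try dsimp only
    have e1 : i - r + 1 + r - 1 = i := by omega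
    rw [e1, Nat.add_sub_cancel]
    have e3 : q * i + r = ℓ := by omega
    rw [e3]
  · simp only [dominoBwd, if_neg hc]
    try dsimp only
    refine ⟨h1, le_refl _, Nat.zero_le _, by simp, fun h => absurd rfl h,
      fun _ => ⟨by omega, by omega⟩, ?_⟩
    have hF : dominoFwd a (i, 0, ℓ - a * i) = (i, a * i + (ℓ - a * i)) := by
      simp [dominoFwd]
    rw [hF]
    have : a * i + (ℓ - a * i) = ℓ := by omega
    rw [this]

lemma dominoFwd_spec (a b : ℕ) (p : ℕ × ℕ × ℕ) (h1 : 1 ≤ p.1)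
    (hnz : p.2.1 ≠ 0 → 1 ≤ p.2.2 ∧ p.2.2 ≤ a)
    (hz : p.2.1 = 0 → 1 ≤ p.2.2 ∧ p.2.2 ≤ b) :
    1 ≤ (dominoFwd a p).1 ∧ 1 ≤ (dominoFwd a p).2 ∧
    (dominoFwd a p).2 ≤ a * (dominoFwd a p).1 + b ∧
    (dominoFwd a p).1 + (if p.2.1 ≠ 0 then 1 else 0) = p.1 + p.2.1 ∧
    dominoBwd a (dominoFwd a p) = p := by
  obtain ⟨α, β, γ⟩ := p
  simp only at h1 hnz hz
  by_cases hb : β = 0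
  · subst hb
    obtain ⟨hγ1, hγb⟩ := hz rfl
    have hF : dominoFwd a (α, 0, γ) = (α, a * α + γ) := by simp [dominoFwd]
    rw [hF]
    try dsimp only
    refine ⟨h1, by omega, by omega, by simp, ?_⟩
    have hB : dominoBwd a (α, a * α + γ) = (α, 0, a * α + γ - a * α) := by
      simp only [dominoBwd]
      rw [if_neg (by omega)]
    rw [hB]
    have : a * α + γ - a * α = γ := by omega
    rw [this]
  · obtain ⟨hγ1, hγa⟩ := hnz hb
    have hβ1 : 1 ≤ β := by omega
    have hi1 : 1 ≤ α + β - 1 := by omega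
    have hβi : β ≤ α + β - 1 := by omega
    have h5 : (γ - 1) * (α + β - 1) = γ * (α + β - 1) - (α + β - 1) := by
      rw [Nat.sub_one_mul]
    have h6 : (α + β - 1) ≤ γ * (α + β - 1) := Nat.le_mul_of_pos_left _ (by omega)
    have h7 : γ * (α + β - 1) ≤ a * (α + β - 1) := Nat.mul_le_mul_right _ hγa
    have hℓa : (γ - 1) * (α + β - 1) + β ≤ a * (α + β - 1) := by omega
    have hF : dominoFwd a (α, β, γ)
        = (α + β - 1, (γ - 1) * (α + β - 1) + β) := by
      simp only [dominoFwd]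
      rw [if_pos (show (α, β, γ).2.1 ≠ 0 from hb)]
    rw [hF]
    try dsimp only
    have hq : ((γ - 1) * (α + β - 1) + β - 1) / (α + β - 1) = γ - 1 := by
      have e : (γ - 1) * (α + β - 1) + β - 1 = (β - 1) + (γ - 1) * (α + β - 1) := by
        omega
      rw [e, Nat.add_mul_div_right _ _ (show 0 < α + β - 1 by omega),
        Nat.div_eq_of_lt (by omega), zero_add]
    have hr : (γ - 1) * (α + β - 1) + β - (γ - 1) * (α + β - 1) = β := by omega
    refine ⟨hi1, by omega, by omega, by rw [if_pos hb]; omega, ?_⟩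
    simp only [dominoBwd]
    rw [if_pos hℓa]
    try dsimp only
    rw [hq, hr]
    have e1 : α + β - 1 - β + 1 = α := by omega
    have e2 : γ - 1 + 1 = γ := by omega
    rw [e1, e2]

/-- There is a bijection between `T^{a,b}(ν,k) = ⋃_{j=0}^{k} T^{a,b}_j(ν,k)`, the set
of `k`-tuples of colored `ν`-dominos `(α, β, γ)` (with `0 < α ≤ ν`, `β ≤ ν`, exactly
`j` nonzero dominos colored in `{1,…,a}`, `k-j` zero dominos colored in `{1,…,b}`,
and entry sum `ν + j`, for some `j ≤ k`), and the set of `(aν+b)`-color compositions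
of `ν` with `k` parts. -/
theorem domino_composition_bijection (a b ν k : ℕ) (hν : 1 ≤ ν) (hk : 1 ≤ k) :
    Nonempty
      ({f : Fin k → ℕ × ℕ × ℕ //
          ∃ j ≤ k,
            (∀ t, 1 ≤ (f t).1 ∧ (f t).1 ≤ ν ∧ (f t).2.1 ≤ ν) ∧
            (Finset.univ.filter (fun t => (f t).2.1 ≠ 0)).card = j ∧
            (∑ t, ((f t).1 + (f t).2.1)) = ν + j ∧
            (∀ t, (f t).2.1 ≠ 0 → 1 ≤ (f t).2.2 ∧ (f t).2.2 ≤ a) ∧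
            (∀ t, (f t).2.1 = 0 → 1 ≤ (f t).2.2 ∧ (f t).2.2 ≤ b)} ≃
        {g : Fin k → ℕ × ℕ //
          (∀ t, 1 ≤ (g t).1) ∧ (∑ t, (g t).1) = ν ∧
          (∀ t, 1 ≤ (g t).2 ∧ (g t).2 ≤ a * (g t).1 + b)}) := by
  constructor
  refine
    { toFun := fun ⟨f, hf⟩ => ⟨fun t => dominoFwd a (f t), ?_⟩
      invFun := fun ⟨g, hg⟩ => ⟨fun t => dominoBwd a (g t), ?_⟩
      left_inv := ?_
      right_inv := ?_ }
  · obtain ⟨j, hjk, hbound, hcard, hsum, hnz, hz⟩ := hf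
    have spec := fun t => dominoFwd_spec a b (f t) (hbound t).1 (hnz t) (hz t)
    refine ⟨fun t => (spec t).1, ?_, fun t => ⟨(spec t).2.1, (spec t).2.2.1⟩⟩
    have hsum2 : (∑ t, (dominoFwd a (f t)).1)
        + (∑ t : Fin k, if (f t).2.1 ≠ 0 then 1 else 0) = ν + j := by
      rw [← Finset.sum_add_distrib]
      simp_rw [fun t => (spec t).2.2.2.1]
      exact hsum
    rw [Finset.card_filter] at hcard
    have : ∑ t, (dominoFwd a (f t)).1 = ν := by omega
    exact this
  · obtain ⟨hg1, hgsum, hgc⟩ := hg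
    have hle : ∀ t, (g t).1 ≤ ν := by
      intro t
      rw [← hgsum]
      exact Finset.single_le_sum (f := fun t => (g t).1)
        (fun t _ => Nat.zero_le _) (mem_univ t)
    have spec := fun t => dominoBwd_spec a b (g t) (hg1 t) (hgc t).1 (hgc t).2
    refine ⟨(Finset.univ.filter (fun t => (dominoBwd a (g t)).2.1 ≠ 0)).card,
      le_trans (Finset.card_filter_le _ _) (by simp), ?_, rfl, ?_,
      fun t => (spec t).2.2.2.2.1, fun t => (spec t).2.2.2.2.2.1⟩
    · exact fun t => ⟨(spec t).1, le_trans (spec t).2.1 (hle t),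
        le_trans (spec t).2.2.1 (hle t)⟩
    · have : ∑ t, ((dominoBwd a (g t)).1 + (dominoBwd a (g t)).2.1)
          = ν + (Finset.univ.filter (fun t => (dominoBwd a (g t)).2.1 ≠ 0)).card := by
        calc ∑ t, ((dominoBwd a (g t)).1 + (dominoBwd a (g t)).2.1)
            = ∑ t, ((g t).1 + if (dominoBwd a (g t)).2.1 ≠ 0 then 1 else 0) :=
              Finset.sum_congr rfl fun t _ => (spec t).2.2.2.1
          _ = _ := by rw [Finset.sum_add_distrib, hgsum, Finset.card_filter]
      exact this
  · rintro ⟨f, hf⟩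
    obtain ⟨j, hjk, hbound, hcard, hsum, hnz, hz⟩ := hf
    apply Subtype.ext
    funext t
    exact (dominoFwd_spec a b (f t) (hbound t).1 (hnz t) (hz t)).2.2.2.2
  · rintro ⟨g, hg⟩
    obtain ⟨hg1, hgsum, hgc⟩ := hg
    apply Subtype.ext
    funext t
    exact (dominoBwd_spec a b (g t) (hg1 t) (hgc t).1 (hgc t).2).2.2.2.2.2.2
end

section
/- For ν ≥ k ≥ 1, the number of compositions of ν with k parts in which no part equals 1 and each part i > 1 carries one of i-1 colors equals Σ_{j=0}^{k} (-1)^{k-j} C(k,j) C(ν+j-1, ν-k). -/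
open Finset fwdDiff

/-!
Cutting a part `i` of colour `ℓ` into the two pieces `ℓ - 1` and `i - 1 - ℓ` identifies these
colored compositions with the weak compositions of `ν - 2k` into `2k` parts, of which there are
`C(ν - 1, ν - 2k)` by stars and bars. The alternating sum is the `k`-th forward difference of
`x ↦ C(x, ν - k)` at `ν - 1`, which is also `C(ν - 1, ν - 2k)` (and `0` when `2k > ν`).
-/

theorem fwdDiff_iter_choose_apply (k r m : ℕ) :
    (Δ_[1])^[k] (fun x ↦ x.choose r : ℕ → ℤ) m = if k ≤ r then (m.choose (r - k) : ℤ) else 0 := by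
  split_ifs with h
  · obtain ⟨j, rfl⟩ := Nat.exists_eq_add_of_le h
    simp [fwdDiff_iter_choose]
  · obtain ⟨s, rfl⟩ := Nat.exists_eq_add_of_lt (not_le.1 h)
    have hconst : (Δ_[1])^[r] (fun x ↦ x.choose r : ℕ → ℤ) = fun _ ↦ 1 := by
      simpa using fwdDiff_iter_choose 0 r
    rw [show r + s + 1 = s + (1 + r) by ring, Function.iterate_add_apply,
      Function.iterate_add_apply, hconst, Function.iterate_one, fwdDiff_const]
    simp [fwdDiff_iter_eq_sum_shift]

theorem sum_range_neg_one_pow_mul_choose_mul_choose_add (k m r : ℕ) :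
    ∑ j ∈ range (k + 1), (-1 : ℤ) ^ (k - j) * k.choose j * (m + j).choose r =
      if k ≤ r then (m.choose (r - k) : ℤ) else 0 := by
  rw [← fwdDiff_iter_choose_apply, fwdDiff_iter_eq_sum_shift]
  simp

theorem Nat.card_fun_sum_eq (ι : Type*) [Fintype ι] (n : ℕ) :
    Nat.card {F : ι → ℕ // ∑ i, F i = n} = (Fintype.card ι + n - 1).choose n := by
  classical
  have hmem : ∀ F : ι → ℕ, F ∈ univ.piAntidiag n ↔ ∑ i, F i = n := by simp
  rw [← Nat.card_congr (Equiv.subtypeEquivRight hmem), Nat.card_eq_finsetCard, ← Finset.card_univ,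
    ← card_finsuppAntidiag_nat_eq_choose, finsuppAntidiag, card_map, card_attach]

theorem sum_sum_type_add_two_mul_card {ι : Type*} [Fintype ι] (F : ι ⊕ ι → ℕ) :
    ∑ x, F x + 2 * Fintype.card ι = ∑ t, (F (.inl t) + F (.inr t) + 2) := by
  simp [Fintype.sum_sum_type, sum_add_distrib, mul_comm]

section ColoredCompositions

variable (ι : Type*) [Fintype ι] (ν : ℕ)

def coloredCompositionEquiv :
    {f : ι → ℕ × ℕ // (∀ t, 2 ≤ (f t).1) ∧ (∑ t, (f t).1) = ν ∧
        (∀ t, 1 ≤ (f t).2 ∧ (f t).2 ≤ (f t).1 - 1)} ≃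
      {F : ι ⊕ ι → ℕ // ∑ x, F x + 2 * Fintype.card ι = ν} where
  toFun f := ⟨Sum.elim (fun t ↦ (f.1 t).2 - 1) (fun t ↦ (f.1 t).1 - 1 - (f.1 t).2), by
    obtain ⟨hpart, hsum, hcolor⟩ := f.2
    rw [sum_sum_type_add_two_mul_card]
    refine Eq.trans (sum_congr rfl fun t _ ↦ ?_) hsum
    have := hpart t; have := hcolor t
    simp only [Sum.elim_inl, Sum.elim_inr]
    omega⟩
  invFun F := ⟨fun t ↦ (F.1 (.inl t) + F.1 (.inr t) + 2, F.1 (.inl t) + 1),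
    fun t ↦ by simp, (sum_sum_type_add_two_mul_card F.1).symm.trans F.2,
    fun t ↦ by simp⟩
  left_inv f := by
    obtain ⟨hpart, -, hcolor⟩ := f.2
    ext t
    · have := hpart t; have := hcolor t
      simp only [Sum.elim_inl, Sum.elim_inr]; omega
    · have := hcolor t
      simp only [Sum.elim_inl]; omega
  right_inv F := by
    ext (t | t) <;> simp

theorem card_coloredCompositions :
    Nat.card {f : ι → ℕ × ℕ // (∀ t, 2 ≤ (f t).1) ∧ (∑ t, (f t).1) = ν ∧
        (∀ t, 1 ≤ (f t).2 ∧ (f t).2 ≤ (f t).1 - 1)} =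
      if 2 * Fintype.card ι ≤ ν then (ν - 1).choose (ν - 2 * Fintype.card ι) else 0 := by
  rw [Nat.card_congr (coloredCompositionEquiv ι ν)]
  split_ifs with h
  · have hsum : ∀ F : ι ⊕ ι → ℕ,
        ∑ x, F x + 2 * Fintype.card ι = ν ↔ ∑ x, F x = ν - 2 * Fintype.card ι :=
      fun F ↦ by omega
    rw [Nat.card_congr (Equiv.subtypeEquivRight hsum), Nat.card_fun_sum_eq, Fintype.card_sum]
    congr 1
    omega
  · rw [Nat.card_eq_zero]
    left
    exact ⟨fun ⟨F, hF⟩ ↦ h (hF ▸ Nat.le_add_left _ _)⟩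

end ColoredCompositions

/-- The number of compositions of `ν` with `k` parts in which no part equals `1` and
each part `i > 1` carries one of `i - 1` colors equals
`Σ_{j=0}^{k} (-1)^{k-j} C(k,j) C(ν+j-1, ν-k)`. -/
theorem card_nMinusOne_color_compositions (ν k : ℕ) (hk : 1 ≤ k) (hν : k ≤ ν) :
    (Nat.card {f : Fin k → ℕ × ℕ //
        (∀ t, 2 ≤ (f t).1) ∧ (∑ t, (f t).1) = ν ∧
        (∀ t, 1 ≤ (f t).2 ∧ (f t).2 ≤ (f t).1 - 1)} : ℤ) =
      ∑ j ∈ Finset.range (k + 1),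
        (-1 : ℤ) ^ (k - j) * Nat.choose k j * Nat.choose (ν + j - 1) (ν - k) := by
  have hshift : ∀ j, ν + j - 1 = (ν - 1) + j := fun j ↦ by omega
  simp_rw [hshift, sum_range_neg_one_pow_mul_choose_mul_choose_add, card_coloredCompositions,
    Fintype.card_fin]
  by_cases h : 2 * k ≤ ν
  · rw [if_pos h, if_pos (by omega), show ν - k - k = ν - 2 * k by omega]
  · rw [if_neg h, if_neg (by omega), Nat.cast_zero]
end

section
/- The number of compositions of ν with k parts, each part of size i colored with one of i colors, in which the color 1 never appears, equals the number of compositions of ν with k parts having no part equal to 1 and each part i > 1 colored with one of i-1 colors; both equal Σ_{j=0}^{k} (-1)^{k-j} C(k,j) C(ν+j-1, ν-k). -/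
open Finset

/-- Iterated finite difference of `j ↦ C(x+j, m)`. -/
lemma altsum_choose (k : ℕ) : ∀ x m : ℕ,
    ∑ j ∈ Finset.range (k + 1),
        (-1 : ℤ) ^ (k - j) * (Nat.choose k j) * (Nat.choose (x + j) m)
      = if k ≤ m then ((Nat.choose x (m - k)) : ℤ) else 0 := by
  induction k with
  | zero => intro x m; simp
  | succ k ih =>
    intro x m
    have key : ∑ j ∈ Finset.range (k + 2),
          (-1 : ℤ) ^ (k + 1 - j) * (Nat.choose (k+1) j) * (Nat.choose (x + j) m)
        = (∑ j ∈ Finset.range (k + 1),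
            (-1 : ℤ) ^ (k - j) * (Nat.choose k j) * (Nat.choose (x + 1 + j) m))
          - (∑ j ∈ Finset.range (k + 1),
            (-1 : ℤ) ^ (k - j) * (Nat.choose k j) * (Nat.choose (x + j) m)) := by
      rw [Finset.sum_range_succ' (fun j =>
        (-1 : ℤ) ^ (k + 1 - j) * (Nat.choose (k+1) j) * (Nat.choose (x + j) m))]
      have hterm : ∀ j, (-1 : ℤ) ^ (k + 1 - (j+1)) * (Nat.choose (k+1) (j+1)) *
            (Nat.choose (x + (j+1)) m)
          = (-1 : ℤ) ^ (k - j) * (Nat.choose k j) * (Nat.choose (x + 1 + j) m)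
            + (-1 : ℤ) ^ (k - j) * (Nat.choose k (j+1)) * (Nat.choose (x + 1 + j) m) := by
        intro j
        have h1 : k + 1 - (j+1) = k - j := by omega
        have h2 : x + (j+1) = x + 1 + j := by omega
        rw [h1, h2, Nat.choose_succ_succ]
        push_cast
        ring
      simp only [hterm]
      rw [Finset.sum_add_distrib]
      have hlast : ∑ j ∈ Finset.range (k + 1),
            (-1 : ℤ) ^ (k - j) * (Nat.choose k (j+1)) * (Nat.choose (x + 1 + j) m)
          = ∑ j ∈ Finset.range k,
            (-1 : ℤ) ^ (k - j) * (Nat.choose k (j+1)) * (Nat.choose (x + 1 + j) m) := by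
        rw [Finset.sum_range_succ]
        simp [Nat.choose_succ_self]
      have hFkx : ∑ j ∈ Finset.range (k + 1),
            (-1 : ℤ) ^ (k - j) * (Nat.choose k j) * (Nat.choose (x + j) m)
          = (∑ j ∈ Finset.range k,
              (-1 : ℤ) ^ (k - (j+1)) * (Nat.choose k (j+1)) * (Nat.choose (x + (j+1)) m))
            + (-1 : ℤ) ^ k * (Nat.choose k 0) * (Nat.choose x m) := by
        rw [Finset.sum_range_succ' (fun j =>
          (-1 : ℤ) ^ (k - j) * (Nat.choose k j) * (Nat.choose (x + j) m))]
        simp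
      have hsign : ∑ j ∈ Finset.range k,
            (-1 : ℤ) ^ (k - j) * (Nat.choose k (j+1)) * (Nat.choose (x + 1 + j) m)
          = -∑ j ∈ Finset.range k,
            (-1 : ℤ) ^ (k - (j+1)) * (Nat.choose k (j+1)) * (Nat.choose (x + (j+1)) m) := by
        rw [← Finset.sum_neg_distrib]
        refine Finset.sum_congr rfl fun j hj => ?_
        have hj' : j < k := Finset.mem_range.mp hj
        have h1 : k - j = (k - (j+1)) + 1 := by omega
        have h2 : x + 1 + j = x + (j+1) := by omega
        rw [h1, h2, pow_succ]
        ring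
      rw [hlast, hsign, hFkx]
      have h0 : (-1 : ℤ) ^ (k + 1 - 0) * (Nat.choose (k+1) 0) * (Nat.choose (x + 0) m)
          = -((-1 : ℤ) ^ k * (Nat.choose k 0) * (Nat.choose x m)) := by
        simp [pow_succ]
      rw [h0]
      ring
    rw [key, ih (x + 1) m, ih x m]
    split_ifs with h1 h2 h2
    · have h3 : m - k = (m - (k+1)) + 1 := by omega
      have h4 := Nat.choose_succ_succ' x (m - (k+1))
      rw [← h3] at h4
      omega
    · have hkm : k = m := by omega
      subst hkm
      simp
    · omega
    · simp

lemma card_weak (α : Type*) [Fintype α] [DecidableEq α] (m : ℕ) :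
    Nat.card {P : α → ℕ // ∑ i, P i = m} = (Fintype.card α + m - 1).choose m := by
  rw [Nat.card_congr (Sym.equivNatSumOfFintype α m).symm, Nat.card_eq_fintype_card,
    Sym.card_sym_eq_choose]

/-- The number of `n`-color compositions of `ν` with `k` parts avoiding color `1`
equals the number of compositions of `ν` with `k` parts with no part `1` and each
part `i > 1` colored in one of `i - 1` colors; both equal
`Σ_{j=0}^{k} (-1)^{k-j} C(k,j) C(ν+j-1, ν-k)`. -/
theorem ncolor_no_color_one (ν k : ℕ) (hk : 1 ≤ k) (hν : k ≤ ν) :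
    (Nat.card {f : Fin k → ℕ × ℕ //
        (∀ t, 1 ≤ (f t).1) ∧ (∑ t, (f t).1) = ν ∧
        (∀ t, 2 ≤ (f t).2 ∧ (f t).2 ≤ (f t).1)} : ℤ) =
      (Nat.card {f : Fin k → ℕ × ℕ //
        (∀ t, 2 ≤ (f t).1) ∧ (∑ t, (f t).1) = ν ∧
        (∀ t, 1 ≤ (f t).2 ∧ (f t).2 ≤ (f t).1 - 1)} : ℤ) ∧
    (Nat.card {f : Fin k → ℕ × ℕ //
        (∀ t, 1 ≤ (f t).1) ∧ (∑ t, (f t).1) = ν ∧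
        (∀ t, 2 ≤ (f t).2 ∧ (f t).2 ≤ (f t).1)} : ℤ) =
      ∑ j ∈ Finset.range (k + 1),
        (-1 : ℤ) ^ (k - j) * Nat.choose k j * Nat.choose (ν + j - 1) (ν - k) := by
  classical
  have hrw : ∀ j, ν + j - 1 = (ν - 1) + j := by intro j; omega
  -- the first set
  have e1 : {f : Fin k → ℕ × ℕ //
        (∀ t, 1 ≤ (f t).1) ∧ (∑ t, (f t).1) = ν ∧
        (∀ t, 2 ≤ (f t).2 ∧ (f t).2 ≤ (f t).1)} ≃
      {f : Fin k → ℕ × ℕ //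
        (∀ t, 2 ≤ (f t).1) ∧ (∑ t, (f t).1) = ν ∧
        (∀ t, 1 ≤ (f t).2 ∧ (f t).2 ≤ (f t).1 - 1)} := by
    refine ⟨fun f => ⟨fun t => ((f.1 t).1, (f.1 t).2 - 1), ?_, ?_, ?_⟩,
            fun g => ⟨fun t => ((g.1 t).1, (g.1 t).2 + 1), ?_, ?_, ?_⟩, ?_, ?_⟩
    · intro t; dsimp only; have := f.2.2.2 t; omega
    · simpa using f.2.2.1
    · intro t; dsimp only; have := f.2.2.2 t; constructor <;> omega
    · intro t; dsimp only; have := g.2.1 t; omega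
    · simpa using g.2.2.1
    · intro t; dsimp only; have h := g.2.2.2 t; have h' := g.2.1 t; constructor <;> omega
    · intro f
      apply Subtype.ext; funext t
      have := f.2.2.2 t
      simp only
      rw [Prod.ext_iff]
      constructor <;> simp <;> omega
    · intro g
      apply Subtype.ext; funext t
      simp only
      rw [Prod.ext_iff]
      constructor <;> simp
  -- counting the first set
  have hcard : (Nat.card {f : Fin k → ℕ × ℕ //
        (∀ t, 1 ≤ (f t).1) ∧ (∑ t, (f t).1) = ν ∧
        (∀ t, 2 ≤ (f t).2 ∧ (f t).2 ≤ (f t).1)} : ℤ)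
      = if k ≤ ν - k then ((ν - 1).choose (ν - k - k) : ℤ) else 0 := by
    by_cases h2k : 2 * k ≤ ν
    · rw [if_pos (by omega)]
      have e2 : {f : Fin k → ℕ × ℕ //
            (∀ t, 1 ≤ (f t).1) ∧ (∑ t, (f t).1) = ν ∧
            (∀ t, 2 ≤ (f t).2 ∧ (f t).2 ≤ (f t).1)} ≃
          {P : Fin k ⊕ Fin k → ℕ // ∑ s, P s = ν - 2 * k} := by
        refine ⟨fun f => ⟨Sum.elim (fun t => (f.1 t).2 - 2) (fun t => (f.1 t).1 - (f.1 t).2),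
            ?_⟩,
          fun P => ⟨fun t => (P.1 (.inl t) + P.1 (.inr t) + 2, P.1 (.inl t) + 2),
            ?_, ?_, ?_⟩, ?_, ?_⟩
        · obtain ⟨f, h1, h2, h3⟩ := f
          rw [Fintype.sum_sum_type]
          simp only [Sum.elim_inl, Sum.elim_inr]
          rw [← Finset.sum_add_distrib]
          have hterm : ∀ t ∈ Finset.univ, ((f t).2 - 2) + ((f t).1 - (f t).2)
              = (f t).1 - 2 := by
            intro t _; have := h3 t; omega
          rw [Finset.sum_congr rfl hterm]
          have hsum : ∑ t, ((f t).1 - 2) + 2 * k = ν := by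
            have h4 : ∀ t ∈ Finset.univ, (f t).1 = ((f t).1 - 2) + 2 := by
              intro t _; have := h3 t; omega
            rw [Finset.sum_congr rfl h4, Finset.sum_add_distrib] at h2
            simp only [Finset.sum_const, Finset.card_univ, Fintype.card_fin,
              smul_eq_mul] at h2
            omega
          omega
        · intro t; dsimp only; omega
        · obtain ⟨P, hP⟩ := P
          simp only
          rw [Finset.sum_add_distrib, Finset.sum_add_distrib]
          rw [Fintype.sum_sum_type] at hP
          simp only [Finset.sum_const, Finset.card_univ, Fintype.card_fin, smul_eq_mul]
          omega
        · intro t; dsimp only; constructor <;> omega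
        · intro f
          apply Subtype.ext; funext t
          have := f.2.2.2 t
          simp only [Sum.elim_inl, Sum.elim_inr]
          rw [Prod.ext_iff]
          constructor <;> simp <;> omega
        · intro P
          apply Subtype.ext; funext s
          cases s <;> simp
      rw [Nat.card_congr e2, card_weak]
      have : Fintype.card (Fin k ⊕ Fin k) = 2 * k := by
        simp [Fintype.card_sum]; omega
      rw [this]
      congr 2 <;> omega
    · rw [if_neg (by omega)]
      have : IsEmpty {f : Fin k → ℕ × ℕ //
          (∀ t, 1 ≤ (f t).1) ∧ (∑ t, (f t).1) = ν ∧
          (∀ t, 2 ≤ (f t).2 ∧ (f t).2 ≤ (f t).1)} := by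
        refine ⟨fun f => ?_⟩
        obtain ⟨f, h1, h2, h3⟩ := f
        have hge : ∑ t, (2 : ℕ) ≤ ∑ t, (f t).1 :=
          Finset.sum_le_sum fun t _ => by have := h3 t; omega
        simp only [Finset.sum_const, Finset.card_univ, Fintype.card_fin,
          smul_eq_mul] at hge
        omega
      rw [Nat.card_of_isEmpty]
      simp
  refine ⟨by exact_mod_cast Nat.card_congr e1, ?_⟩
  calc (Nat.card {f : Fin k → ℕ × ℕ //
        (∀ t, 1 ≤ (f t).1) ∧ (∑ t, (f t).1) = ν ∧
        (∀ t, 2 ≤ (f t).2 ∧ (f t).2 ≤ (f t).1)} : ℤ)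
      = if k ≤ ν - k then (((ν - 1).choose (ν - k - k)) : ℤ) else 0 := hcard
    _ = ∑ j ∈ Finset.range (k + 1),
        (-1 : ℤ) ^ (k - j) * Nat.choose k j * Nat.choose ((ν - 1) + j) (ν - k) :=
        (altsum_choose k (ν - 1) (ν - k)).symm
    _ = ∑ j ∈ Finset.range (k + 1),
        (-1 : ℤ) ^ (k - j) * Nat.choose k j * Nat.choose (ν + j - 1) (ν - k) := by
        refine Finset.sum_congr rfl fun j _ => ?_
        rw [hrw j]
end

section
/- For ν ≥ 1 and 1 ≤ k < ν: Σ_{j=0}^{k} (-2)^{k-j} C(k,j) C(ν+j-1, ν-k) = Σ_{j=1}^{k} (-1)^{k-j} C(k,j) C(ν-k-1, 2j-1), and for k = ν the left-hand side equals (-1)^ν. -/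
open Finset PowerSeries

private lemma nat_choose_symm_aux (k m j : ℕ) (hk : 1 ≤ k) :
    Nat.choose (k + j - 1 + m) (k + j - 1) = Nat.choose (k + m + j - 1) m := by
  have h1 : k + j - 1 + m = k + m + j - 1 := by omega
  rw [h1, ← Nat.choose_symm (by omega : m ≤ k + m + j - 1)]
  congr 1
  omega

private lemma key (k m : ℕ) (hk : 1 ≤ k) (hm : 1 ≤ m) :
    ∑ j ∈ Finset.range (k + 1),
        (-2 : ℤ) ^ (k - j) * Nat.choose k j * Nat.choose (k + m + j - 1) m =
      ∑ j ∈ Finset.Icc 1 k,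
        (-1 : ℤ) ^ (k - j) * Nat.choose k j * Nat.choose (m - 1) (2 * j - 1) := by
  set A : ℤ⟦X⟧ := ∑ j ∈ Finset.range (k + 1),
      PowerSeries.C ((-2) ^ (k - j) * (Nat.choose k j : ℤ)) *
        (invOneSubPow ℤ (k + j)).val with hA
  set B : ℤ⟦X⟧ := ∑ j ∈ Finset.range (k + 1),
      PowerSeries.C ((-1) ^ (k - j) * (Nat.choose k j : ℤ)) *
        (X ^ (2 * j) * (invOneSubPow ℤ (2 * j)).val) with hB
  have hu : ∀ d : ℕ, (invOneSubPow ℤ d).val * ((1 - X : ℤ⟦X⟧) ^ d) = 1 := by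
    intro d
    rw [← invOneSubPow_inv_eq_one_sub_pow]
    exact (invOneSubPow ℤ d).val_inv
  have hmulA : A * (1 - X) ^ (2 * k) = (2 * X - 1) ^ k := by
    rw [hA, Finset.sum_mul]
    have h1 : ((1 : ℤ⟦X⟧) + (-2) * (1 - X)) ^ k = (2 * X - 1) ^ k := by
      congr 1; ring
    rw [← h1, add_pow]
    apply Finset.sum_congr rfl
    intro j hj
    have hjk : j ≤ k := by simpa [Nat.lt_succ_iff] using hj
    have hsplit : (1 - X : ℤ⟦X⟧) ^ (2 * k) = (1 - X) ^ (k + j) * (1 - X) ^ (k - j) := by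
      rw [← pow_add]; congr 1; omega
    rw [hsplit]
    have h2 : PowerSeries.C ((-2) ^ (k - j) * (Nat.choose k j : ℤ)) *
        (invOneSubPow ℤ (k + j)).val * ((1 - X) ^ (k + j) * (1 - X) ^ (k - j)) =
        PowerSeries.C ((-2) ^ (k - j) * (Nat.choose k j : ℤ)) *
        ((invOneSubPow ℤ (k + j)).val * (1 - X) ^ (k + j)) * (1 - X) ^ (k - j) := by ring
    rw [h2, hu (k + j), mul_one, mul_pow]
    simp only [map_mul, map_pow, map_neg, map_ofNat, map_natCast]
    ring
  have hmulB : B * (1 - X) ^ (2 * k) = (2 * X - 1) ^ k := by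
    rw [hB, Finset.sum_mul]
    have h1 : ((X : ℤ⟦X⟧) ^ 2 + -((1 - X) ^ 2)) ^ k = (2 * X - 1) ^ k := by
      congr 1; ring
    rw [← h1, add_pow]
    apply Finset.sum_congr rfl
    intro j hj
    have hjk : j ≤ k := by simpa [Nat.lt_succ_iff] using hj
    have hsplit : (1 - X : ℤ⟦X⟧) ^ (2 * k) = (1 - X) ^ (2 * j) * (1 - X) ^ (2 * (k - j)) := by
      rw [← pow_add]; congr 1; omega
    rw [hsplit]
    have : PowerSeries.C ((-1) ^ (k - j) * (Nat.choose k j : ℤ)) *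
        (X ^ (2 * j) * (invOneSubPow ℤ (2 * j)).val) *
        ((1 - X) ^ (2 * j) * (1 - X) ^ (2 * (k - j))) =
        PowerSeries.C ((-1) ^ (k - j) * (Nat.choose k j : ℤ)) *
        (X ^ (2 * j) * ((invOneSubPow ℤ (2 * j)).val * (1 - X) ^ (2 * j)) *
          (1 - X) ^ (2 * (k - j))) := by ring
    rw [this, hu (2 * j), mul_one]
    simp only [map_mul, map_pow, map_neg, map_one, map_natCast]
    rw [pow_mul, neg_pow ((1 - X : ℤ⟦X⟧) ^ 2) (k - j), pow_mul]
    ring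
  have hAB : A = B := by
    have h1 : A * (1 - X) ^ (2 * k) = B * (1 - X) ^ (2 * k) := hmulA.trans hmulB.symm
    have h2 : ∀ Z : ℤ⟦X⟧, Z * (1 - X) ^ (2 * k) * (invOneSubPow ℤ (2 * k)).val = Z := by
      intro Z
      rw [mul_assoc, mul_comm ((1 - X : ℤ⟦X⟧) ^ (2 * k)) _, hu (2 * k), mul_one]
    calc A = A * (1 - X) ^ (2 * k) * (invOneSubPow ℤ (2 * k)).val := (h2 A).symm
      _ = B * (1 - X) ^ (2 * k) * (invOneSubPow ℤ (2 * k)).val := by rw [h1]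
      _ = B := h2 B
  have hcA : (coeff m) A =
      ∑ j ∈ Finset.range (k + 1),
        (-2 : ℤ) ^ (k - j) * Nat.choose k j * Nat.choose (k + m + j - 1) m := by
    rw [hA, map_sum]
    apply Finset.sum_congr rfl
    intro j hj
    rw [coeff_C_mul, invOneSubPow_val_eq_mk_sub_one_add_choose_of_pos ℤ _ (by omega),
      coeff_mk, nat_choose_symm_aux k m j hk]
  have hcB : (coeff m) B =
      ∑ j ∈ Finset.Icc 1 k,
        (-1 : ℤ) ^ (k - j) * Nat.choose k j * Nat.choose (m - 1) (2 * j - 1) := by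
    rw [hB, map_sum]
    have hsplit : Finset.range (k + 1) = insert 0 (Finset.Icc 1 k) := by
      ext x; simp [Nat.lt_succ_iff]; omega
    rw [hsplit, Finset.sum_insert (by simp)]
    have h0 : (coeff m) (PowerSeries.C ((-1) ^ (k - 0) * (Nat.choose k 0 : ℤ)) *
        (X ^ (2 * 0) * (invOneSubPow ℤ (2 * 0)).val)) = 0 := by
      have h20 : (2 * 0 : ℕ) = 0 := rfl
      rw [coeff_C_mul, h20, pow_zero, one_mul, invOneSubPow_zero, Units.val_one,
        PowerSeries.coeff_one, if_neg (by omega : ¬ m = 0), mul_zero]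
    rw [h0, zero_add]
    apply Finset.sum_congr rfl
    intro j hj
    have hj1 : 1 ≤ j := (Finset.mem_Icc.mp hj).1
    rw [coeff_C_mul, coeff_X_pow_mul']
    split_ifs with h
    · rw [invOneSubPow_val_eq_mk_sub_one_add_choose_of_pos ℤ _ (by omega), coeff_mk]
      have : 2 * j - 1 + (m - 2 * j) = m - 1 := by omega
      rw [this]
    · have : Nat.choose (m - 1) (2 * j - 1) = 0 :=
        Nat.choose_eq_zero_of_lt (by omega)
      rw [this]
      simp
  rw [← hcA, ← hcB, hAB]

/-- For `1 ≤ k < ν`, the `a = 1, b = -2` evaluation satisfies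
`Σ_{j=0}^{k} (-2)^{k-j} C(k,j) C(ν+j-1, ν-k) = Σ_{j=1}^{k} (-1)^{k-j} C(k,j) C(ν-k-1, 2j-1)`,
and for `k = ν` the left-hand side equals `(-1)^ν`. -/
theorem nMinusTwo_color_count (ν : ℕ) (hν : 1 ≤ ν) :
    (∀ k, 1 ≤ k → k < ν →
      ∑ j ∈ Finset.range (k + 1),
          (-2 : ℤ) ^ (k - j) * Nat.choose k j * Nat.choose (ν + j - 1) (ν - k) =
        ∑ j ∈ Finset.Icc 1 k,
          (-1 : ℤ) ^ (k - j) * Nat.choose k j * Nat.choose (ν - k - 1) (2 * j - 1)) ∧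
    ∑ j ∈ Finset.range (ν + 1),
        (-2 : ℤ) ^ (ν - j) * Nat.choose ν j * Nat.choose (ν + j - 1) (ν - ν) =
      (-1 : ℤ) ^ ν := by
  constructor
  · intro k hk hkν
    have hνeq : ν = k + (ν - k) := by omega
    have hm : 1 ≤ ν - k := by omega
    have := key k (ν - k) hk hm
    rw [hνeq, Nat.add_sub_cancel_left]
    exact this
  · have h := add_pow (1 : ℤ) (-2) ν
    have h1 : ((1 : ℤ) + -2) = -1 := by norm_num
    rw [h1] at h
    rw [h]
    apply Finset.sum_congr rfl
    intro j hj
    simp [Nat.sub_self]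
end

section
/- Define W_ν = Σ_{k=1}^{ν} Σ_{j=1}^{k} (-1)^{k-j} C(k,j) C(ν-k-1, 2j-1) for ν ≥ 3, with W_1 = -1 and W_2 = 1 interpreted consistently; then W satisfies W_ν = W_{ν-1} + W_{ν-2} for ν > 2, and hence W_ν equals the Fibonacci-type value F_{ν-3} where F_{-2} = -1, F_{-1} = 1, F_0 = 0, F_1 = 1, …. -/
open Finset Polynomial

namespace FibShiftAux

noncomputable def S (n : ℕ) : Polynomial ℤ :=
  ∑ k ∈ Finset.Icc 1 n, (X + 1) ^ n * (1 - X) ^ k * X ^ (2 * (n - k))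

def Asum (v : ℕ) : ℤ :=
  ∑ k ∈ Finset.Icc 1 v, ∑ j ∈ Finset.Icc 1 k,
    (-1 : ℤ) ^ (k - j) * Nat.choose k j * Ring.choose ((v : ℤ) - k - 1) (2 * j - 1)

lemma S_succ (n : ℕ) :
    S (n + 1) = (X + 1) * X ^ 2 * S n + (1 - X ^ 2) ^ (n + 1) := by
  rw [S, ← Finset.insert_Icc_right_eq_Icc_add_one (by omega), Finset.sum_insert (by simp), add_comm]
  congr 1
  · rw [S, Finset.mul_sum]
    refine Finset.sum_congr rfl fun k hk => ?_
    have hk' : k ≤ n := (Finset.mem_Icc.mp hk).2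
    rw [show 2 * (n + 1 - k) = 2 * (n - k) + 2 by omega]
    ring
  · rw [Nat.sub_self, show (1 - X ^ 2 : ℤ[X]) = (X + 1) * (1 - X) by ring, mul_pow]
    simp

lemma S_mul (n : ℕ) : (1 - X - X ^ 2) * S n
    = (X + 1) ^ n * (1 - X) ^ (n + 1) - (X + 1) ^ n * (1 - X) * X ^ (2 * n) := by
  induction n with
  | zero => simp [S]
  | succ n ih =>
    rw [S_succ, mul_add, show (1 - X - X ^ 2) * ((X + 1) * X ^ 2 * S n)
        = (X + 1) * X ^ 2 * ((1 - X - X ^ 2) * S n) by ring, ih,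
      show (1 - X ^ 2 : ℤ[X]) = (X + 1) * (1 - X) by ring, mul_pow,
      show 2 * (n + 1) = 2 * n + 2 by ring]
    ring

lemma omx_pow (m : ℕ) : (1 - X ^ 2 : ℤ[X]) ^ m
    = ∑ i ∈ range (m + 1), C ((-1) ^ i * (m.choose i) : ℤ) * X ^ (2 * i) := by
  rw [show (1 - X ^ 2 : ℤ[X]) = -X ^ 2 + 1 by ring, add_pow]
  refine Finset.sum_congr rfl fun i hi => ?_
  rw [neg_pow, ← pow_mul, one_pow]
  simp only [map_mul, map_pow, map_neg, map_one, map_natCast]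
  ring

lemma omx_coeff_odd (m d : ℕ) : ((1 - X ^ 2 : ℤ[X]) ^ m).coeff (2 * d + 1) = 0 := by
  rw [omx_pow, finset_sum_coeff]
  refine Finset.sum_eq_zero fun i _ => ?_
  rw [coeff_C_mul, coeff_X_pow, if_neg (by omega), mul_zero]

lemma omx_coeff (m : ℕ) :
    ((1 - X ^ 2 : ℤ[X]) ^ (m + 1)).coeff (2 * m) = (-1) ^ m * (m + 1) := by
  rw [omx_pow, finset_sum_coeff]
  rw [Finset.sum_eq_single m (fun i _ hi => by
      rw [coeff_C_mul, coeff_X_pow, if_neg (by omega), mul_zero])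
    (fun h => absurd (Finset.mem_range.mpr (by omega)) h)]
  rw [coeff_C_mul, coeff_X_pow, if_pos rfl, mul_one, Nat.choose_succ_self_right]
  push_cast
  ring

lemma inner_eq (m k : ℕ) (hk : 1 ≤ k) :
    ∑ j ∈ Icc 1 k, (-1 : ℤ) ^ (k - j) * (k.choose j) * (m.choose (2 * j - 1) : ℤ)
      = ((X + 1) ^ m * (1 - X ^ 2) ^ k : ℤ[X]).coeff (2 * k - 1) := by
  rw [omx_pow, Finset.mul_sum, finset_sum_coeff, Finset.sum_range_succ]
  have hlast : (((X + 1) ^ m : ℤ[X]) * (C ((-1) ^ k * (k.choose k) : ℤ) * X ^ (2 * k))).coeff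
      (2 * k - 1) = 0 := by
    rw [mul_left_comm, coeff_C_mul, coeff_mul_X_pow', if_neg (by omega), mul_zero]
  rw [hlast, add_zero]
  refine Finset.sum_nbij' (fun j => k - j) (fun i => k - i) ?_ ?_ ?_ ?_ ?_
  · intro j hj
    simp only [Finset.mem_Icc] at hj
    exact Finset.mem_range.mpr (by omega)
  · intro i hi
    simp only [Finset.mem_range] at hi
    exact Finset.mem_Icc.mpr (by omega)
  · intro j hj; simp only [Finset.mem_Icc] at hj; omega
  · intro i hi; simp only [Finset.mem_range] at hi; omega
  · intro j hj
    simp only [Finset.mem_Icc] at hj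
    rw [mul_left_comm, coeff_C_mul, coeff_mul_X_pow', if_pos (by omega),
      coeff_X_add_one_pow]
    rw [show 2 * k - 1 - 2 * (k - j) = 2 * j - 1 by omega,
      Nat.choose_symm (by omega : j ≤ k)]

lemma ring_choose_neg_one (n : ℕ) : Ring.choose (-1 : ℤ) n = (-1) ^ n := by
  induction n with
  | zero => simp [Ring.choose_zero_right]
  | succ n ih =>
    have h := Ring.choose_succ_succ (-1 : ℤ) n
    norm_num at h
    have h2 : Ring.choose (-1 : ℤ) (n + 1) = -(-1 : ℤ) ^ n := by
      rw [ih] at h; linarith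
    rw [h2, pow_succ]; ring

lemma alt_sum (v : ℕ) (hv : 1 ≤ v) :
    ∑ j ∈ Icc 1 v, (-1 : ℤ) ^ (v - j) * (v.choose j) = -(-1 : ℤ) ^ v := by
  have hins : range (v + 1) = insert 0 (Icc 1 v) := by
    ext x; simp only [Finset.mem_range, Finset.mem_insert, Finset.mem_Icc]; omega
  have h0 : ∑ j ∈ range (v + 1), (-1 : ℤ) ^ j * v.choose j = 0 := by
    rw [Int.alternating_sum_range_choose, if_neg (by omega)]
  rw [hins, Finset.sum_insert (by simp)] at h0
  simp only [pow_zero, Nat.choose_zero_right, Nat.cast_one, mul_one, one_mul] at h0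
  have key : ∀ j ∈ Icc 1 v, (-1 : ℤ) ^ (v - j) * (v.choose j)
      = (-1 : ℤ) ^ v * ((-1 : ℤ) ^ j * (v.choose j)) := by
    intro j hj
    simp only [Finset.mem_Icc] at hj
    have h1 : (-1 : ℤ) ^ (v - j) * (-1 : ℤ) ^ j = (-1 : ℤ) ^ v := by
      rw [← pow_add, show v - j + j = v by omega]
    have h2 : ((-1 : ℤ) ^ j) * ((-1 : ℤ) ^ j) = 1 := by
      rw [← pow_add, ← two_mul, pow_mul]; norm_num
    have h3 : (-1 : ℤ) ^ (v - j) = (-1) ^ v * (-1) ^ j := by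
      calc (-1 : ℤ) ^ (v - j) = (-1) ^ (v - j) * ((-1) ^ j * (-1) ^ j) := by
            rw [h2, mul_one]
        _ = ((-1 : ℤ) ^ (v - j) * (-1) ^ j) * (-1) ^ j := by ring
        _ = (-1 : ℤ) ^ v * (-1) ^ j := by rw [h1]
    rw [h3]; ring
  rw [Finset.sum_congr rfl key, ← Finset.mul_sum]
  have h4 : ∑ j ∈ Icc 1 v, (-1 : ℤ) ^ j * (v.choose j) = -1 := by linarith
  rw [h4]; ring

lemma bridge (n : ℕ) : Asum (n + 3) = (-1) ^ (n + 3) + (S (n + 2)).coeff (2 * n + 3) := by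
  have hset : Finset.Icc 1 (n + 3) = insert (n + 3) (Finset.Icc 1 (n + 2)) := by
    ext x; simp only [Finset.mem_Icc, Finset.mem_insert]; omega
  rw [Asum, hset, Finset.sum_insert (by simp only [Finset.mem_Icc]; omega)]
  have harg : ((n + 3 : ℕ) : ℤ) - ((n + 3 : ℕ) : ℤ) - 1 = -1 := by push_cast; ring
  congr 1
  · -- top term k = n + 3
    rw [harg]
    have key : ∀ j ∈ Icc 1 (n + 3),
        (-1 : ℤ) ^ (n + 3 - j) * ((n + 3).choose j) * Ring.choose (-1 : ℤ) (2 * j - 1)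
          = -((-1 : ℤ) ^ (n + 3 - j) * ((n + 3).choose j)) := by
      intro j hj
      have hj' := Finset.mem_Icc.mp hj
      have hpow : (-1 : ℤ) ^ (2 * j - 1) = -1 :=
        Odd.neg_one_pow (by exact ⟨j - 1, by omega⟩)
      rw [ring_choose_neg_one, hpow]
      ring
    rw [Finset.sum_congr rfl key, Finset.sum_neg_distrib,
      alt_sum (n + 3) (by omega)]
    ring
  · rw [S, finset_sum_coeff]
    refine Finset.sum_congr rfl fun k hk => ?_
    have hk' := Finset.mem_Icc.mp hk
    have hcast : ∀ j : ℕ, Ring.choose (((n + 3 : ℕ) : ℤ) - (k : ℤ) - 1) (2 * j - 1)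
        = ((n + 2 - k).choose (2 * j - 1) : ℤ) := by
      intro j
      rw [show ((n + 3 : ℕ) : ℤ) - (k : ℤ) - 1 = ((n + 2 - k : ℕ) : ℤ) by
        rw [Nat.cast_sub hk'.2]; push_cast; ring]
      exact Ring.choose_natCast _ _
    rw [Finset.sum_congr rfl fun j _ => by rw [hcast j]]
    rw [inner_eq (n + 2 - k) k hk'.1]
    rw [show ((X + 1 : ℤ[X]) ^ (n + 2) * (1 - X) ^ k * X ^ (2 * (n + 2 - k)))
        = ((X + 1) ^ (n + 2 - k) * (1 - X ^ 2) ^ k) * X ^ (2 * (n + 2 - k)) by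
      rw [show (1 - X ^ 2 : ℤ[X]) = (X + 1) * (1 - X) by ring, mul_pow, ← mul_assoc,
        ← pow_add, show n + 2 - k + k = n + 2 by omega]]
    rw [coeff_mul_X_pow', if_pos (by omega),
      show 2 * n + 3 - 2 * (n + 2 - k) = 2 * k - 1 by omega]

lemma rec1 (n : ℕ) : (S (n + 3)).coeff (2 * n + 5)
    = (S (n + 2)).coeff (2 * n + 3) + (S (n + 2)).coeff (2 * n + 2) := by
  have h := S_succ (n + 2)
  rw [show (n + 2) + 1 = n + 3 by ring] at h
  rw [h, coeff_add,
    show ((X + 1) * X ^ 2 * S (n + 2) : ℤ[X]) = X ^ 3 * S (n + 2) + X ^ 2 * S (n + 2) by ring,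
    coeff_add, coeff_X_pow_mul', coeff_X_pow_mul', if_pos (by omega), if_pos (by omega),
    show 2 * n + 5 - 3 = 2 * n + 2 by omega, show 2 * n + 5 - 2 = 2 * n + 3 by omega,
    show 2 * n + 5 = 2 * (n + 2) + 1 by ring, omx_coeff_odd]
  ring

lemma rec2 (n : ℕ) : (S (n + 3)).coeff (2 * n + 4)
    = (S (n + 2)).coeff (2 * n + 2) + (S (n + 2)).coeff (2 * n + 1) + (-1) ^ n * (n + 3) := by
  have h := S_succ (n + 2)
  rw [show (n + 2) + 1 = n + 3 by ring] at h
  have homx : ((1 - X ^ 2 : ℤ[X]) ^ (n + 3)).coeff (2 * n + 4) = (-1) ^ n * (n + 3) := by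
    have := omx_coeff (n + 2)
    rw [show (n + 2) + 1 = n + 3 by ring, show 2 * (n + 2) = 2 * n + 4 by ring] at this
    rw [this, show ((-1 : ℤ)) ^ (n + 2) = (-1) ^ n by rw [pow_add]; norm_num]
    push_cast; ring
  rw [h, coeff_add,
    show ((X + 1) * X ^ 2 * S (n + 2) : ℤ[X]) = X ^ 3 * S (n + 2) + X ^ 2 * S (n + 2) by ring,
    coeff_add, coeff_X_pow_mul', coeff_X_pow_mul', if_pos (by omega), if_pos (by omega),
    show 2 * n + 4 - 3 = 2 * n + 1 by omega, show 2 * n + 4 - 2 = 2 * n + 2 by omega, homx]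
  ring

lemma fixL (n : ℕ) : (S (n + 2)).coeff (2 * n + 3)
    = (S (n + 2)).coeff (2 * n + 2) + (S (n + 2)).coeff (2 * n + 1) + (-1) ^ n * (n + 2) := by
  have h := congrArg (fun p : ℤ[X] => p.coeff (2 * n + 3)) (S_mul (n + 2))
  rw [show ((1 - X - X ^ 2) * S (n + 2) : ℤ[X])
      = S (n + 2) - X ^ 1 * S (n + 2) - X ^ 2 * S (n + 2) by ring] at h
  rw [coeff_sub, coeff_sub, coeff_X_pow_mul', coeff_X_pow_mul',
    if_pos (by omega : 1 ≤ 2 * n + 3), if_pos (by omega : 2 ≤ 2 * n + 3),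
    show 2 * n + 3 - 1 = 2 * n + 2 by omega, show 2 * n + 3 - 2 = 2 * n + 1 by omega] at h
  have hR2 : ((X + 1 : ℤ[X]) ^ (n + 2) * (1 - X) * X ^ (2 * (n + 2))).coeff (2 * n + 3) = 0 := by
    rw [coeff_mul_X_pow', if_neg (by omega)]
  have hfac : ((X + 1 : ℤ[X]) ^ (n + 2) * (1 - X) ^ (n + 2 + 1))
      = (1 - X ^ 2) ^ (n + 2) - X ^ 1 * (1 - X ^ 2) ^ (n + 2) := by
    rw [show (1 - X ^ 2 : ℤ[X]) = (X + 1) * (1 - X) by ring, mul_pow, pow_succ]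
    ring
  have homx1 : ((1 - X ^ 2 : ℤ[X]) ^ (n + 2)).coeff (2 * n + 3) = 0 := by
    have := omx_coeff_odd (n + 2) (n + 1)
    rwa [show 2 * (n + 1) + 1 = 2 * n + 3 by ring] at this
  have homx2 : ((1 - X ^ 2 : ℤ[X]) ^ (n + 2)).coeff (2 * n + 2) = (-1) ^ (n + 1) * (n + 2) := by
    have := omx_coeff (n + 1)
    rwa [show (n + 1) + 1 = n + 2 by ring, show 2 * (n + 1) = 2 * n + 2 by ring,
      Nat.cast_add, Nat.cast_one] at this
  rw [hfac, coeff_sub, coeff_sub, coeff_X_pow_mul', if_pos (by omega : 1 ≤ 2 * n + 3),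
    show 2 * n + 3 - 1 = 2 * n + 2 by omega, homx1, homx2, hR2] at h
  have hsign : ((-1 : ℤ)) ^ (n + 1) = -(-1) ^ n := by rw [pow_succ]; ring
  rw [hsign] at h
  linarith

lemma rec2' (n : ℕ) : (S (n + 3)).coeff (2 * n + 4)
    = (S (n + 2)).coeff (2 * n + 3) + (-1) ^ n := by
  rw [rec2, fixL]
  ring

lemma Asum_rec (n : ℕ) : Asum (n + 5) = Asum (n + 4) + Asum (n + 3) := by
  have b0 := bridge n
  have b1 := bridge (n + 1)
  have b2 := bridge (n + 2)
  rw [show (n + 1) + 3 = n + 4 by ring, show 2 * (n + 1) + 3 = 2 * n + 5 by ring,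
    show (n + 1) + 2 = n + 3 by ring] at b1
  rw [show (n + 2) + 3 = n + 5 by ring, show 2 * (n + 2) + 3 = 2 * n + 7 by ring,
    show (n + 2) + 2 = n + 4 by ring] at b2
  have r1 := rec1 (n + 1)
  rw [show (n + 1) + 3 = n + 4 by ring, show 2 * (n + 1) + 5 = 2 * n + 7 by ring,
    show (n + 1) + 2 = n + 3 by ring, show 2 * (n + 1) + 3 = 2 * n + 5 by ring,
    show 2 * (n + 1) + 2 = 2 * n + 4 by ring] at r1
  have r2 := rec2' n
  have e3 : ((-1 : ℤ)) ^ (n + 3) = -(-1) ^ n := by rw [pow_add]; norm_num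
  have e4 : ((-1 : ℤ)) ^ (n + 4) = (-1) ^ n := by rw [pow_add]; norm_num
  have e5 : ((-1 : ℤ)) ^ (n + 5) = -(-1) ^ n := by rw [pow_add]; norm_num
  rw [b0, b1, b2, r1, r2, e3, e4, e5]
  ring

lemma S2_eq : S 2 = 1 - X ^ 2 + X ^ 3 - X ^ 5 := by
  rw [S, show Finset.Icc 1 2 = {1, 2} by rfl, Finset.sum_insert (by decide),
    Finset.sum_singleton]
  norm_num
  ring

lemma Asum3 : Asum 3 = 0 := by
  have := bridge 0
  norm_num at this
  rw [this, S2_eq]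
  simp [coeff_sub, coeff_add, coeff_one, coeff_X_pow]

lemma Asum4 : Asum 4 = 1 := by
  have hb := bridge 1
  norm_num at hb
  have hr := rec1 0
  norm_num at hr
  rw [hb, hr, S2_eq]
  simp [coeff_sub, coeff_add, coeff_one, coeff_X_pow]

end FibShiftAux

open Finset

/-- Let `W ν = Σ_{k=1}^{ν} Σ_{j=1}^{k} (-1)^{k-j} C(k,j) C(ν-k-1, 2j-1)` for `ν ≥ 3`
(where `C(ν-k-1, 2j-1)` is the generalized binomial coefficient, allowing a negative
upper argument at `k = ν`), with `W 1 = -1` and `W 2 = 1`.  Then `W` satisfies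
`W ν = W (ν-1) + W (ν-2)` for `ν > 2`, and `W ν = F (ν-3)` where `F` is the
Fibonacci sequence extended to negative indices (`F 0 = 0`, `F 1 = 1`,
`F n = F (n+2) - F (n+1)`, so `F (-2) = -1`, `F (-1) = 1`). -/
theorem fib_shifted_count (W : ℕ → ℤ) (h1 : W 1 = -1) (h2 : W 2 = 1)
    (hW : ∀ ν, 3 ≤ ν → W ν =
      ∑ k ∈ Finset.Icc 1 ν, ∑ j ∈ Finset.Icc 1 k,
        (-1 : ℤ) ^ (k - j) * Nat.choose k j *
          Ring.choose ((ν : ℤ) - k - 1) (2 * j - 1))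
    (F : ℤ → ℤ) (hF0 : F 0 = 0) (hF1 : F 1 = 1)
    (hFrec : ∀ n : ℤ, F (n + 2) = F (n + 1) + F n) :
    (∀ ν, 2 < ν → W ν = W (ν - 1) + W (ν - 2)) ∧
      (∀ ν, 1 ≤ ν → W ν = F ((ν : ℤ) - 3)) := by
  have hA : ∀ ν, 3 ≤ ν → W ν = FibShiftAux.Asum ν := fun ν h => hW ν h
  have hrec : ∀ ν, 2 < ν → W ν = W (ν - 1) + W (ν - 2) := by
    intro ν hν
    rcases Nat.lt_or_ge ν 5 with h5 | h5
    · interval_cases ν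
      · rw [hA 3 (by norm_num), FibShiftAux.Asum3]
        norm_num [h1, h2]
      · rw [hA 4 (by norm_num), FibShiftAux.Asum4,
          show 4 - 1 = 3 by rfl, show 4 - 2 = 2 by rfl, hA 3 (by norm_num),
          FibShiftAux.Asum3, h2]
        norm_num
    · obtain ⟨n, rfl⟩ : ∃ n, ν = n + 5 := ⟨ν - 5, by omega⟩
      rw [show n + 5 - 1 = n + 4 by omega, show n + 5 - 2 = n + 3 by omega,
        hA _ (by omega), hA _ (by omega), hA _ (by omega)]
      exact FibShiftAux.Asum_rec n
  refine ⟨hrec, ?_⟩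
  have hFm1 : F (-1) = 1 := by
    have h := hFrec (-1); norm_num at h; linarith
  have hFm2 : F (-2) = -1 := by
    have h := hFrec (-2); norm_num at h; linarith
  intro ν
  induction ν using Nat.strong_induction_on with
  | _ ν ih =>
    intro hν
    rcases Nat.lt_or_ge ν 3 with h3 | h3
    · interval_cases ν
      · rw [h1, show ((1 : ℕ) : ℤ) - 3 = -2 by norm_num, hFm2]
      · rw [h2, show ((2 : ℕ) : ℤ) - 3 = -1 by norm_num, hFm1]
    · obtain ⟨n, rfl⟩ : ∃ n, ν = n + 3 := ⟨ν - 3, by omega⟩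
      rw [hrec (n + 3) (by omega), show n + 3 - 1 = n + 2 by omega,
        show n + 3 - 2 = n + 1 by omega,
        ih (n + 2) (by omega) (by omega), ih (n + 1) (by omega) (by omega)]
      have h := hFrec ((n : ℤ) - 2)
      have e1 : (n : ℤ) - 2 + 2 = ((n + 3 : ℕ) : ℤ) - 3 := by push_cast; ring
      have e2 : (n : ℤ) - 2 + 1 = ((n + 2 : ℕ) : ℤ) - 3 := by push_cast; ring
      have e3 : (n : ℤ) - 2 = ((n + 1 : ℕ) : ℤ) - 3 := by push_cast; ring
      rw [e1, e2, e3] at h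
      linarith
end

section
/- For all ν ≥ 3: F_{ν-3} = Σ_{k=1}^{ν} Σ_{j=1}^{k} (-1)^{k-j} C(k,j) C(ν-k-1, 2j-1), where F is the Fibonacci sequence with F_0 = 0, F_1 = 1. -/
open Finset


def S1 (ν : ℕ) : ℤ :=
  ∑ k ∈ range (ν+1), ∑ i ∈ range k,
    (-1:ℤ)^k * (-1)^(i+1) * (k.choose (i+1)) * Ring.choose ((ν:ℤ)-k-1) (2*i+1)

def S2 (ν : ℕ) : ℤ :=
  ∑ k ∈ range (ν+1), ∑ i ∈ range k,
    (-1:ℤ)^k * (-1)^(i+1) * (k.choose (i+1)) * Ring.choose ((ν:ℤ)-k-1) (2*i)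

def S3 (ν : ℕ) : ℤ :=
  ∑ k ∈ range (ν+1), ∑ i ∈ range k,
    (-1:ℤ)^k * (-1)^i * (k.choose (i+2)) * Ring.choose ((ν:ℤ)-k-1) (2*i+1)

lemma rc_neg_one (r : ℕ) : Ring.choose (-1 : ℤ) r = (-1)^r := by
  rw [Ring.choose, show (-1 : ℤ) - r + 1 = -(r:ℤ) by ring, Ring.multichoose_neg_self]

lemma alt (n : ℕ) (hn : n ≠ 0) : ∑ i ∈ range n, (-1:ℤ)^i * (n.choose (i+1)) = 1 := by
  have h0 := Int.alternating_sum_range_choose (n := n)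
  rw [if_neg hn, Finset.sum_range_succ'] at h0
  have h1 : ∑ i ∈ range n, (-1:ℤ)^(i+1) * (n.choose (i+1)) =
      - ∑ i ∈ range n, (-1:ℤ)^i * (n.choose (i+1)) := by
    rw [← Finset.sum_neg_distrib]
    exact Finset.sum_congr rfl fun i _ => by ring
  rw [h1] at h0
  simp at h0
  linarith

lemma inner2 (a : ℤ) (k : ℕ) :
    ∑ i ∈ range k, (-1:ℤ)^k * (-1)^(i+1) * (k.choose (i+1)) * Ring.choose (a+1) (2*i)
    = (∑ i ∈ range k, (-1:ℤ)^k * (-1)^(i+1) * (k.choose (i+1)) * Ring.choose a (2*i))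
      + ∑ i ∈ range k, (-1:ℤ)^k * (-1)^i * (k.choose (i+2)) * Ring.choose a (2*i+1) := by
  cases k with
  | zero => simp
  | succ m =>
    have hdiff : ∑ i ∈ range (m+1),
        ((-1:ℤ)^(m+1) * (-1)^(i+1) * ((m+1).choose (i+1)) * Ring.choose (a+1) (2*i)
          - (-1:ℤ)^(m+1) * (-1)^(i+1) * ((m+1).choose (i+1)) * Ring.choose a (2*i))
        = ∑ i ∈ range (m+1), (-1:ℤ)^(m+1) * (-1)^i * ((m+1).choose (i+2)) *
            Ring.choose a (2*i+1) := by
      rw [Finset.sum_range_succ' (f := fun i =>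
        (-1:ℤ)^(m+1) * (-1)^(i+1) * ((m+1).choose (i+1)) * Ring.choose (a+1) (2*i)
          - (-1:ℤ)^(m+1) * (-1)^(i+1) * ((m+1).choose (i+1)) * Ring.choose a (2*i)),
        Finset.sum_range_succ (f := fun i =>
          (-1:ℤ)^(m+1) * (-1)^i * ((m+1).choose (i+2)) * Ring.choose a (2*i+1))]
      have htop : ((m+1).choose (m+2) : ℤ) = 0 := by
        norm_cast
        exact Nat.choose_eq_zero_of_lt (by omega)
      rw [htop, show (2*0 : ℕ) = 0 by norm_num, Ring.choose_zero_right, Ring.choose_zero_right]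
      rw [mul_zero, zero_mul, add_zero]
      rw [sub_self, add_zero]
      refine Finset.sum_congr rfl fun i _ => ?_
      rw [show (2*(i+1) : ℕ) = (2*i+1)+1 by ring, Ring.choose_succ_succ]
      ring
    rw [Finset.sum_sub_distrib] at hdiff
    linarith

lemma rel1 (ν : ℕ) : S1 (ν+1) = S1 ν + S2 ν + (-1:ℤ)^(ν+1) := by
  unfold S1 S2
  rw [Finset.sum_range_succ]
  have hb : ∑ i ∈ range (ν+1),
      (-1:ℤ)^(ν+1) * (-1)^(i+1) * ((ν+1).choose (i+1)) *
        Ring.choose (((ν+1:ℕ):ℤ)-((ν+1:ℕ):ℤ)-1) (2*i+1) = (-1)^(ν+1) := by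
    calc ∑ i ∈ range (ν+1),
        (-1:ℤ)^(ν+1) * (-1)^(i+1) * ((ν+1).choose (i+1)) *
          Ring.choose (((ν+1:ℕ):ℤ)-((ν+1:ℕ):ℤ)-1) (2*i+1)
        = ∑ i ∈ range (ν+1), (-1:ℤ)^(ν+1) * ((-1)^i * ((ν+1).choose (i+1))) := by
          refine Finset.sum_congr rfl fun i _ => ?_
          rw [show (((ν+1:ℕ):ℤ)-((ν+1:ℕ):ℤ)-1) = (-1:ℤ) by ring, rc_neg_one,
            show (-1:ℤ)^(2*i+1) = -1 from Odd.neg_one_pow ⟨i, by ring⟩]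
          ring
      _ = (-1)^(ν+1) := by rw [← Finset.mul_sum, alt (ν+1) (Nat.succ_ne_zero ν), mul_one]
  have hm : ∑ k ∈ range (ν+1), ∑ i ∈ range k,
        (-1:ℤ)^k * (-1)^(i+1) * (k.choose (i+1)) *
          Ring.choose (((ν+1:ℕ):ℤ)-k-1) (2*i+1)
      = (∑ k ∈ range (ν+1), ∑ i ∈ range k,
          (-1:ℤ)^k * (-1)^(i+1) * (k.choose (i+1)) * Ring.choose ((ν:ℤ)-k-1) (2*i+1))
        + ∑ k ∈ range (ν+1), ∑ i ∈ range k,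
          (-1:ℤ)^k * (-1)^(i+1) * (k.choose (i+1)) * Ring.choose ((ν:ℤ)-k-1) (2*i) := by
    rw [← Finset.sum_add_distrib]
    refine Finset.sum_congr rfl fun k _ => ?_
    rw [← Finset.sum_add_distrib]
    refine Finset.sum_congr rfl fun i _ => ?_
    rw [show ((ν+1:ℕ):ℤ)-k-1 = ((ν:ℤ)-k-1)+1 by push_cast; ring, Ring.choose_succ_succ]
    ring
  rw [hm, hb]

lemma rel2 (ν : ℕ) : S2 (ν+1) = S2 ν + S3 ν + (-1:ℤ)^ν := by
  unfold S2 S3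
  rw [Finset.sum_range_succ]
  have hb : ∑ i ∈ range (ν+1),
      (-1:ℤ)^(ν+1) * (-1)^(i+1) * ((ν+1).choose (i+1)) *
        Ring.choose (((ν+1:ℕ):ℤ)-((ν+1:ℕ):ℤ)-1) (2*i) = (-1)^ν := by
    calc ∑ i ∈ range (ν+1),
        (-1:ℤ)^(ν+1) * (-1)^(i+1) * ((ν+1).choose (i+1)) *
          Ring.choose (((ν+1:ℕ):ℤ)-((ν+1:ℕ):ℤ)-1) (2*i)
        = ∑ i ∈ range (ν+1), (-1:ℤ)^ν * ((-1)^i * ((ν+1).choose (i+1))) := by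
          refine Finset.sum_congr rfl fun i _ => ?_
          rw [show (((ν+1:ℕ):ℤ)-((ν+1:ℕ):ℤ)-1) = (-1:ℤ) by ring, rc_neg_one,
            show (-1:ℤ)^(2*i) = 1 from Even.neg_one_pow ⟨i, by ring⟩, pow_succ]
          ring
      _ = (-1)^ν := by rw [← Finset.mul_sum, alt (ν+1) (Nat.succ_ne_zero ν), mul_one]
  have hm : ∑ k ∈ range (ν+1), ∑ i ∈ range k,
        (-1:ℤ)^k * (-1)^(i+1) * (k.choose (i+1)) *
          Ring.choose (((ν+1:ℕ):ℤ)-k-1) (2*i)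
      = (∑ k ∈ range (ν+1), ∑ i ∈ range k,
          (-1:ℤ)^k * (-1)^(i+1) * (k.choose (i+1)) * Ring.choose ((ν:ℤ)-k-1) (2*i))
        + ∑ k ∈ range (ν+1), ∑ i ∈ range k,
          (-1:ℤ)^k * (-1)^i * (k.choose (i+2)) * Ring.choose ((ν:ℤ)-k-1) (2*i+1) := by
    rw [← Finset.sum_add_distrib]
    refine Finset.sum_congr rfl fun k _ => ?_
    rw [show (((ν+1:ℕ):ℤ)-k-1) = ((ν:ℤ)-k-1)+1 by push_cast; ring]
    exact inner2 ((ν:ℤ)-k-1) k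
  rw [hm, hb]

lemma rel3 (ν : ℕ) : S3 (ν+1) = S1 ν - S3 ν := by
  unfold S1 S3
  rw [Finset.sum_range_succ']
  simp only [Finset.range_zero, Finset.sum_empty, add_zero]
  have hm : ∀ k ∈ range (ν+1),
      (∑ i ∈ range (k+1), (-1:ℤ)^(k+1) * (-1)^i * ((k+1).choose (i+2)) *
        Ring.choose (((ν+1:ℕ):ℤ)-((k+1:ℕ):ℤ)-1) (2*i+1))
      = (∑ i ∈ range k, (-1:ℤ)^k * (-1)^(i+1) * (k.choose (i+1)) *
          Ring.choose ((ν:ℤ)-k-1) (2*i+1))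
        - ∑ i ∈ range k, (-1:ℤ)^k * (-1)^i * (k.choose (i+2)) *
            Ring.choose ((ν:ℤ)-k-1) (2*i+1) := by
    intro k _
    have hup : (((ν+1:ℕ):ℤ)-((k+1:ℕ):ℤ)-1) = (ν:ℤ)-k-1 := by push_cast; ring
    have hsplit : ∑ i ∈ range (k+1), (-1:ℤ)^(k+1) * (-1)^i * ((k+1).choose (i+2)) *
        Ring.choose (((ν+1:ℕ):ℤ)-((k+1:ℕ):ℤ)-1) (2*i+1)
        = ∑ i ∈ range (k+1),
          ((-1:ℤ)^k * (-1)^(i+1) * (k.choose (i+1)) * Ring.choose ((ν:ℤ)-k-1) (2*i+1)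
            - (-1:ℤ)^k * (-1)^i * (k.choose (i+2)) * Ring.choose ((ν:ℤ)-k-1) (2*i+1)) := by
      refine Finset.sum_congr rfl fun i _ => ?_
      rw [hup, show (k+1).choose (i+2) = k.choose (i+1) + k.choose (i+2) from
        Nat.choose_succ_succ k (i+1)]
      push_cast
      ring
    rw [hsplit, Finset.sum_sub_distrib, Finset.sum_range_succ, Finset.sum_range_succ,
      show (k.choose (k+1) : ℤ) = 0 by norm_cast; exact Nat.choose_eq_zero_of_lt (by omega),
      show (k.choose (k+2) : ℤ) = 0 by norm_cast; exact Nat.choose_eq_zero_of_lt (by omega)]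
    ring
  rw [Finset.sum_congr rfl hm, Finset.sum_sub_distrib]


lemma S1_zero : S1 0 = 0 := by simp [S1]
lemma S2_zero : S2 0 = 0 := by simp [S2]
lemma S3_zero : S3 0 = 0 := by simp [S3]

lemma vals : S1 3 = 0 ∧ S1 4 = 1 ∧ S2 4 = 1 ∧ S2 5 = 0 ∧ S3 4 = -2 ∧ S3 5 = 3 := by
  have e10 := S1_zero; have e20 := S2_zero; have e30 := S3_zero
  have e11 : S1 1 = -1 := by have := rel1 0; rw [e10, e20] at this; norm_num at this; exact this
  have e21 : S2 1 = 1 := by have := rel2 0; rw [e20, e30] at this; norm_num at this; exact this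
  have e31 : S3 1 = 0 := by have := rel3 0; rw [e10, e30] at this; norm_num at this; exact this
  have e12 : S1 2 = 1 := by have := rel1 1; rw [e11, e21] at this; norm_num at this; exact this
  have e22 : S2 2 = 0 := by have := rel2 1; rw [e21, e31] at this; norm_num at this; exact this
  have e32 : S3 2 = -1 := by have := rel3 1; rw [e11, e31] at this; norm_num at this; exact this
  have e13 : S1 3 = 0 := by have := rel1 2; rw [e12, e22] at this; norm_num at this; exact this
  have e23 : S2 3 = 0 := by have := rel2 2; rw [e22, e32] at this; norm_num at this; exact this
  have e33 : S3 3 = 2 := by have := rel3 2; rw [e12, e32] at this; norm_num at this; exact this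
  have e14 : S1 4 = 1 := by have := rel1 3; rw [e13, e23] at this; norm_num at this; exact this
  have e24 : S2 4 = 1 := by have := rel2 3; rw [e23, e33] at this; norm_num at this; exact this
  have e34 : S3 4 = -2 := by have := rel3 3; rw [e13, e33] at this; norm_num at this; exact this
  have e25 : S2 5 = 0 := by have := rel2 4; rw [e24, e34] at this; norm_num at this; exact this
  have e35 : S3 5 = 3 := by have := rel3 4; rw [e14, e34] at this; norm_num at this; exact this
  exact ⟨e13, e14, e24, e25, e34, e35⟩

lemma triple (n : ℕ) : S1 (n+3) = Nat.fib n ∧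
    S2 (n+4) = (Nat.fib n : ℤ) + (-1)^n ∧
    S3 (n+4) = (Nat.fib (n+1) : ℤ) - Nat.fib n - 3*(-1)^n := by
  induction n using Nat.strong_induction_on with
  | _ n ih =>
    match n with
    | 0 =>
      obtain ⟨h1, _, h2, _, h3, _⟩ := vals
      exact ⟨by simpa using h1, by simpa using h2, by simpa using h3⟩
    | 1 =>
      obtain ⟨_, h1, _, h2, _, h3⟩ := vals
      exact ⟨by simpa using h1, by simpa using h2, by simpa using h3⟩
    | (m+2) =>
      obtain ⟨a1, a2, a3⟩ := ih (m+1) (by omega)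
      obtain ⟨b1, b2, b3⟩ := ih m (by omega)
      have h1 := rel1 (m+4)
      have h2 := rel2 (m+5)
      have h3 := rel3 (m+5)
      have hf2 : (Nat.fib (m+2) : ℤ) = Nat.fib (m+1) + Nat.fib m := by
        rw [Nat.fib_add_two]; push_cast; ring
      have hf3 : (Nat.fib (m+3) : ℤ) = Nat.fib (m+2) + Nat.fib (m+1) := by
        rw [show m+3 = (m+1)+2 by omega, Nat.fib_add_two]; push_cast; ring
      have p1 : (-1:ℤ)^(m+1) = -(-1)^m := by rw [pow_add]; norm_num
      have p2 : (-1:ℤ)^(m+2) = (-1)^m := by rw [pow_add]; norm_num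
      have p5 : (-1:ℤ)^(m+5) = -(-1)^m := by rw [pow_add]; norm_num
      simp only [show m+1+3 = m+4 by omega, show m+1+4 = m+5 by omega,
        show m+1+1 = m+2 by omega, show m+4+1 = m+5 by omega, show m+5+1 = m+6 by omega,
        show m+2+3 = m+5 by omega, show m+2+4 = m+6 by omega,
        p1, p2, p5] at a1 a2 a3 b1 b2 b3 h1 h2 h3 ⊢
      refine ⟨by linarith, by linarith, by linarith⟩


lemma sgn (k j : ℕ) (h : j ≤ k) : (-1:ℤ)^(k-j) = (-1)^k * (-1)^j := by
  have h1 : (-1:ℤ)^(2*j) = 1 := by rw [pow_mul]; norm_num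
  calc (-1:ℤ)^(k-j) = (-1)^(k-j) * (-1)^(2*j) := by rw [h1, mul_one]
    _ = (-1)^(k-j+2*j) := (pow_add _ _ _).symm
    _ = (-1)^(k+j) := by rw [show k-j+2*j = k+j by omega]
    _ = (-1)^k * (-1)^j := pow_add _ _ _

lemma conv (ν : ℕ) :
    S1 ν = ∑ k ∈ Finset.Icc 1 ν, ∑ j ∈ Finset.Icc 1 k,
      (-1 : ℤ) ^ (k - j) * Nat.choose k j * Ring.choose ((ν : ℤ) - k - 1) (2 * j - 1) := by
  unfold S1
  rw [show range (ν+1) = insert 0 (Finset.Icc 1 ν) by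
    ext x; simp only [Finset.mem_range, Finset.mem_insert, Finset.mem_Icc]; omega,
    Finset.sum_insert (by simp)]
  simp only [Finset.range_zero, Finset.sum_empty, zero_add]
  refine Finset.sum_congr rfl fun k hk => ?_
  rw [show Finset.Icc 1 k = Finset.Ico 1 (k+1) from (Finset.Ico_add_one_right_eq_Icc 1 k).symm,
    Finset.sum_Ico_eq_sum_range]
  simp only [Nat.add_sub_cancel]
  refine Finset.sum_congr rfl fun i hi => ?_
  have hik : i + 1 ≤ k := Finset.mem_range.mp hi
  rw [show 1+i = i+1 by omega, show 2*(i+1)-1 = 2*i+1 by omega, sgn k (i+1) hik]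

/-- For `ν ≥ 3`,
`F (ν-3) = Σ_{k=1}^{ν} Σ_{j=1}^{k} (-1)^{k-j} C(k,j) C(ν-k-1, 2j-1)`,
where `F` is the Fibonacci sequence (`F 0 = 0`, `F 1 = 1`) and `C(ν-k-1, 2j-1)` is
the generalized binomial coefficient (its upper argument is negative at `k = ν`). -/
theorem fib_eq_double_sum (ν : ℕ) (hν : 3 ≤ ν) :
    (Nat.fib (ν - 3) : ℤ) =
      ∑ k ∈ Finset.Icc 1 ν, ∑ j ∈ Finset.Icc 1 k,
        (-1 : ℤ) ^ (k - j) * Nat.choose k j *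
          Ring.choose ((ν : ℤ) - k - 1) (2 * j - 1) := by
  obtain ⟨n, rfl⟩ : ∃ n, ν = n + 3 := ⟨ν - 3, by omega⟩
  rw [show n+3-3 = n by omega, ← conv (n+3)]
  exact (triple n).1.symm
end

section
/- For integers a, b ≥ 0, the generating function identity holds: Σ_{ν≥1} W_ν t^ν = ((a+b)t - b t^2) / (1 - (a+b+2)t + (b+1)t^2) as formal power series, where W_ν = Σ_{k=1}^{ν} Σ_{j=0}^{k} a^j b^{k-j} C(k,j) C(ν+j-1, ν-k). Equivalently, (1 - (a+b+2)t + (b+1)t^2) · Σ_{ν≥1} W_ν t^ν = (a+b)t - b t^2. -/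
/-!
An `(an+b)`-color composition of `ν` with `k` parts is a `k`-tuple of colored parts, and the
parts are counted by `P = Σ_{n≥1} (an+b) tⁿ = at/(1-t)² + bt/(1-t)`; the double sum defining
`W_ν` is the binomial expansion of the coefficient of `t^ν` in `P^k`. Hence `W = Σ_{k≥1} P^k`,
so `(1 - P) W = P`, and multiplying by `(1-t)²` clears the denominators.
-/

open Finset PowerSeries

section
variable {R : Type*} [CommRing R] (a b : R)

theorem coeff_pow_eq_zero_of_lt {f : R⟦X⟧} (hf : constantCoeff f = 0) {n k : ℕ} (h : n < k) :
    coeff n (f ^ k) = 0 :=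
  X_pow_dvd_iff.mp (pow_dvd_pow_of_dvd (X_dvd_iff.mpr hf) k) n h

theorem one_sub_mul_sum_Icc_pow (f : R⟦X⟧) (n : ℕ) :
    (1 - f) * ∑ k ∈ Icc 1 n, f ^ k = f - f ^ (n + 1) := by
  have : ∑ k ∈ Icc 1 n, f ^ k = f * ∑ i ∈ range n, f ^ i := by
    rw [mul_sum, ← Ico_add_one_right_eq_Icc, sum_Ico_eq_sum_range]
    simp only [Nat.add_sub_cancel, add_comm 1, pow_succ']
  rw [this, mul_left_comm, mul_neg_geom_sum]
  ring

/-- Only finitely many `f ^ k` contribute to a given coefficient of `Σ_{k≥1} f ^ k`, and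
`(1 - f) * Σ_{k≥1} f ^ k = f` can be checked on truncations. -/
theorem one_sub_mul_eq_of_coeff_eq_sum_pow {f W : R⟦X⟧} (hf : constantCoeff f = 0)
    (hW : ∀ n, coeff n W = ∑ k ∈ Icc 1 n, coeff n (f ^ k)) : (1 - f) * W = f := by
  ext n
  have htrunc : trunc (n + 1) W = trunc (n + 1) (∑ k ∈ Icc 1 n, f ^ k) := by
    ext m
    rw [coeff_trunc, coeff_trunc]
    split_ifs with hm
    · rw [hW, map_sum, ← sum_subset (Icc_subset_Icc_right (Nat.lt_succ_iff.mp hm))]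
      intro k hk hk'
      exact coeff_pow_eq_zero_of_lt hf (by simp_all)
    · rfl
  rw [coeff_mul_eq_coeff_trunc_mul_trunc _ _ n.lt_succ_self, htrunc,
    ← coeff_mul_eq_coeff_trunc_mul_trunc _ _ n.lt_succ_self, one_sub_mul_sum_Icc_pow, map_sub,
    coeff_pow_eq_zero_of_lt hf n.lt_succ_self, sub_zero]

/-- `Σ_{n≥1} (an+b) Xⁿ`, with `PowerSeries.mk 1 = 1/(1-X)`. -/
noncomputable def partGF : R⟦X⟧ :=
  X * (C a * PowerSeries.mk 1 ^ 2 + C b * PowerSeries.mk 1)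

theorem constantCoeff_partGF : constantCoeff (partGF a b) = 0 := by
  simp [partGF]

theorem partGF_pow (k : ℕ) : partGF a b ^ k =
    X ^ k * ∑ j ∈ range (k + 1),
      C (a ^ j * b ^ (k - j) * k.choose j) * PowerSeries.mk 1 ^ (k + j) := by
  rw [partGF, mul_pow, add_pow]
  congr 1
  refine sum_congr rfl fun j hj => ?_
  obtain ⟨m, rfl⟩ : ∃ m, k = j + m := ⟨k - j, by grind⟩
  simp only [Nat.add_sub_cancel_left, map_mul, map_pow, map_natCast]
  ring

theorem coeff_partGF_pow {k ν : ℕ} (hk : 1 ≤ k) (hkν : k ≤ ν) :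
    coeff ν (partGF a b ^ k) =
      ∑ j ∈ range (k + 1), a ^ j * b ^ (k - j) * k.choose j * (ν + j - 1).choose (ν - k) := by
  rw [partGF_pow, coeff_X_pow_mul', if_pos hkν, map_sum]
  refine sum_congr rfl fun j _ => ?_
  obtain ⟨d, hd⟩ : ∃ d, k + j = d + 1 := ⟨k + j - 1, by omega⟩
  rw [coeff_C_mul, hd, mk_one_pow_eq_mk_choose_add, PowerSeries.coeff_mk,
    Nat.choose_symm_add, show d + (ν - k) = ν + j - 1 by omega]

theorem one_sub_X_sq_mul_partGF : (1 - X) ^ 2 * partGF a b = C (a + b) * X - C b * X ^ 2 := by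
  have hgeom : (1 - X) * PowerSeries.mk 1 = (1 : R⟦X⟧) := by
    rw [mul_comm, mk_one_mul_one_sub_eq_one]
  calc (1 - X) ^ 2 * partGF a b
      = X * (C a * ((1 - X) * PowerSeries.mk 1) ^ 2
          + C b * (1 - X) * ((1 - X) * PowerSeries.mk 1)) := by
        rw [partGF]; ring
    _ = C (a + b) * X - C b * X ^ 2 := by rw [hgeom, map_add]; ring

end

/-- The generating function of `W ν = Σ_{k=1}^{ν} Σ_{j=0}^{k} aʲ b^{k-j} C(k,j) C(ν+j-1, ν-k)`,
the total number of `(an+b)`-color compositions of `ν`, satisfies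
`(1 - (a+b+2)t + (b+1)t²) · Σ_{ν≥1} W_ν t^ν = (a+b)t - bt²`. -/
theorem colored_comp_gf (a b : ℕ) (W : PowerSeries ℤ)
    (h0 : PowerSeries.coeff 0 W = 0)
    (h : ∀ ν : ℕ, 1 ≤ ν → PowerSeries.coeff ν W =
      ∑ k ∈ Finset.Icc 1 ν, ∑ j ∈ Finset.range (k + 1),
        (a : ℤ) ^ j * (b : ℤ) ^ (k - j) * Nat.choose k j *
          Nat.choose (ν + j - 1) (ν - k)) :
    (1 - PowerSeries.C ((a : ℤ) + b + 2) * PowerSeries.X +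
        PowerSeries.C ((b : ℤ) + 1) * PowerSeries.X ^ 2) * W =
      PowerSeries.C ((a : ℤ) + b) * PowerSeries.X -
        PowerSeries.C (b : ℤ) * PowerSeries.X ^ 2 := by
  have hW : ∀ ν, coeff ν W = ∑ k ∈ Icc 1 ν, coeff ν (partGF (a : ℤ) b ^ k) := by
    rintro (_ | ν)
    · simp [h0]
    · rw [h _ ν.succ_pos]
      refine sum_congr rfl fun k hk => ?_
      rw [mem_Icc] at hk
      exact (coeff_partGF_pow _ _ hk.1 hk.2).symm
  have hfactor : 1 - C ((a : ℤ) + b + 2) * X + C ((b : ℤ) + 1) * X ^ 2 =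
      (1 - X) ^ 2 * (1 - partGF (a : ℤ) b) := by
    rw [mul_one_sub, one_sub_X_sq_mul_partGF, map_add, map_add, map_add, map_one, map_ofNat]
    ring
  rw [hfactor, mul_assoc, one_sub_mul_eq_of_coeff_eq_sum_pow (constantCoeff_partGF _ _) hW,
    one_sub_X_sq_mul_partGF]
end

section
/- For the 2n-color case (a = 2, b = 0), the total count W_ν = Σ_{k=1}^{ν} 2^k C(ν+k-1, ν-k) satisfies W_1 = 2, W_2 = 8, and W_ν = 4 W_{ν-1} - W_{ν-2} for ν > 2. -/
open Finset

/-!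
Writing `C(ν+k-1, ν-k) = C(ν+k-1, 2k-1)`, the count is `W (n+1) = 2 Bₙ(2)`, where `Bₙ` is the
Morgan-Voyce polynomial `Bₙ(x) = Σₖ C(n+k+1, 2k+1) xᵏ`. Pascal's rule splits `Bₙ` against its
companion `bₙ(x) = Σₖ C(n+k, 2k) xᵏ` as `Bₙ₊₁ = bₙ₊₁ + Bₙ` and `bₙ₊₁ = bₙ + x Bₙ`; eliminating `b`
gives `Bₙ₊₂ + Bₙ = (x + 2) Bₙ₊₁`, which at `x = 2` is the recurrence.
-/

section MorganVoyce

variable {R : Type*} [CommSemiring R] (x : R)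

def morganVoyceB (n : ℕ) : R :=
  ∑ k ∈ range (n + 1), x ^ k * (n + k + 1).choose (2 * k + 1)

def morganVoyceb (n : ℕ) : R :=
  ∑ k ∈ range (n + 1), x ^ k * (n + k).choose (2 * k)

theorem morganVoyceB_succ (n : ℕ) :
    morganVoyceB x (n + 1) = morganVoyceb x (n + 1) + morganVoyceB x n := by
  have pascal : ∀ k, (n + 1 + k + 1).choose (2 * k + 1)
      = (n + 1 + k).choose (2 * k) + (n + k + 1).choose (2 * k + 1) := fun k => by
    rw [show n + 1 + k + 1 = n + k + 1 + 1 by ring, Nat.choose_succ_succ, add_right_comm n 1 k]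
  have top_vanishes : (n + (n + 1) + 1).choose (2 * (n + 1) + 1) = 0 :=
    Nat.choose_eq_zero_of_lt (by omega)
  simp only [morganVoyceB, morganVoyceb, pascal, Nat.cast_add, mul_add, sum_add_distrib]
  rw [sum_range_succ (fun k => x ^ k * ((n + k + 1).choose (2 * k + 1) : R)) (n + 1), top_vanishes,
    Nat.cast_zero, mul_zero, add_zero]

theorem morganVoyceb_succ (n : ℕ) :
    morganVoyceb x (n + 1) = morganVoyceb x n + x * morganVoyceB x n := by
  have pascal : ∀ j, (n + 1 + (j + 1)).choose (2 * (j + 1))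
      = (n + j + 1).choose (2 * j + 1) + (n + (j + 1)).choose (2 * (j + 1)) := fun j => by
    rw [show n + 1 + (j + 1) = n + j + 1 + 1 by ring, show 2 * (j + 1) = 2 * j + 1 + 1 by ring,
      Nat.choose_succ_succ, ← add_assoc n j 1]
  have top_vanishes : (n + (n + 1)).choose (2 * (n + 1)) = 0 :=
    Nat.choose_eq_zero_of_lt (by omega)
  have extend : morganVoyceb x n = ∑ k ∈ range (n + 2), x ^ k * ((n + k).choose (2 * k) : R) := by
    rw [sum_range_succ, top_vanishes, Nat.cast_zero, mul_zero, add_zero, morganVoyceb]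
  rw [extend, morganVoyceb, sum_range_succ', sum_range_succ' _ (n + 1), morganVoyceB]
  simp only [pascal]
  simp only [Nat.cast_add, mul_add, sum_add_distrib, pow_succ', mul_assoc, ← mul_sum]
  simp only [pow_zero, add_zero, mul_zero, Nat.choose_zero_right, Nat.cast_one, one_mul]
  ring

theorem morganVoyceB_add_two (n : ℕ) :
    morganVoyceB x (n + 2) + morganVoyceB x n = (x + 2) * morganVoyceB x (n + 1) := by
  calc morganVoyceB x (n + 2) + morganVoyceB x n
      = (morganVoyceb x (n + 1) + morganVoyceB x n) + x * morganVoyceB x (n + 1)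
          + morganVoyceB x (n + 1) := by
        rw [morganVoyceB_succ x (n + 1), morganVoyceb_succ]; ring
    _ = (x + 2) * morganVoyceB x (n + 1) := by rw [← morganVoyceB_succ]; ring

theorem sum_Icc_pow_mul_choose_eq_mul_morganVoyceB (n : ℕ) :
    ∑ k ∈ Icc 1 (n + 1), x ^ k * ((n + 1 + k - 1).choose (n + 1 - k) : R)
      = x * morganVoyceB x n := by
  rw [← Ico_add_one_right_eq_Icc, sum_Ico_eq_sum_range, morganVoyceB, mul_sum,
    Nat.add_sub_cancel]
  refine sum_congr rfl fun k hk_mem => ?_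
  have hk : k ≤ n := Nat.lt_succ_iff.mp (mem_range.mp hk_mem)
  rw [show n + 1 + (1 + k) - 1 = n + k + 1 by omega, show n + 1 - (1 + k) = n - k by omega,
    Nat.choose_symm_of_eq_add (by omega : n + k + 1 = n - k + (2 * k + 1)), pow_add, pow_one,
    mul_assoc]

end MorganVoyce

/-- For `2n`-color compositions (`a = 2`, `b = 0`), the total count
`W ν = Σ_{k=1}^{ν} 2^k C(ν+k-1, ν-k)` satisfies `W 1 = 2`, `W 2 = 8` and
`W ν = 4·W (ν-1) - W (ν-2)` for `ν > 2`. -/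
theorem twoN_color_recurrence
    (W : ℕ → ℤ)
    (hW : ∀ ν, W ν = ∑ k ∈ Finset.Icc 1 ν,
      (2 : ℤ) ^ k * Nat.choose (ν + k - 1) (ν - k)) :
    W 1 = 2 ∧ W 2 = 8 ∧ ∀ ν, 2 < ν → W ν = 4 * W (ν - 1) - W (ν - 2) := by
  have hWB : ∀ n, W (n + 1) = 2 * morganVoyceB (2 : ℤ) n := fun n => by
    rw [hW, sum_Icc_pow_mul_choose_eq_mul_morganVoyceB]
  refine ⟨by simp [hWB 0, morganVoyceB], by simp [hWB 1, morganVoyceB, sum_range_succ], ?_⟩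
  intro ν hν
  obtain ⟨n, rfl⟩ : ∃ n, ν = n + 3 := ⟨ν - 3, by omega⟩
  have hrec := morganVoyceB_add_two (2 : ℤ) n
  rw [show n + 3 - 1 = n + 1 + 1 by omega, show n + 3 - 2 = n + 1 by omega, hWB, hWB, hWB]
  linear_combination 2 * hrec
end

section
/- For the n-color case (a = 1, b = 0), the number of n-color compositions of ν, W_ν = Σ_{k=1}^{ν} C(ν+k-1, ν-k), equals the Fibonacci number F_{2ν} (with F_1 = F_2 = 1), and satisfies W_ν = 3W_{ν-1} - W_{ν-2} for ν > 2 with W_1 = 1, W_2 = 3. -/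
open Finset

lemma key_sum_fib (ν : ℕ) (hν : 1 ≤ ν) :
    ∑ k ∈ Finset.Icc 1 ν, Nat.choose (ν + k - 1) (ν - k) = Nat.fib (2 * ν) := by
  have h2 : 2 * ν - 1 + 1 = 2 * ν := by omega
  have h := Nat.fib_succ_eq_sum_choose (2 * ν - 1)
  rw [Finset.Nat.sum_antidiagonal_eq_sum_range_succ_mk, h2] at h
  rw [h]
  rw [show (2 * ν - 1).succ = ν + ν from by omega, Finset.sum_range_add]
  have hzero : ∑ i ∈ Finset.range ν, Nat.choose i (2 * ν - 1 - i) = 0 := by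
    apply Finset.sum_eq_zero
    intro i hi
    simp only [Finset.mem_range] at hi
    exact Nat.choose_eq_zero_of_lt (by omega)
  rw [hzero, zero_add]
  rw [show Finset.Icc 1 ν = Finset.Ico 1 (ν + 1) by rw [Finset.Ico_add_one_right_eq_Icc],
    Finset.sum_Ico_eq_sum_range]
  apply Finset.sum_congr (by simp)
  intro i hi
  simp only [Finset.mem_range] at hi
  congr 1 <;> omega

lemma fib_three_rec (n : ℕ) : (Nat.fib (n + 4) : ℤ) = 3 * Nat.fib (n + 2) - Nat.fib n := by
  have h1 := Nat.fib_add_two (n := n)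
  have h2 := Nat.fib_add_two (n := n + 1)
  have h3 := Nat.fib_add_two (n := n + 2)
  push_cast [show n + 4 = n + 2 + 2 by ring, h3, h2, h1]
  ring

/-- For `n`-color compositions (`a = 1`, `b = 0`), the total count
`W ν = Σ_{k=1}^{ν} C(ν+k-1, ν-k)` equals the Fibonacci number `F (2ν)`
(with `F 1 = F 2 = 1`), and satisfies `W 1 = 1`, `W 2 = 3` and
`W ν = 3·W (ν-1) - W (ν-2)` for `ν > 2`. -/
theorem n_color_fibonacci
    (W : ℕ → ℤ)
    (hW : ∀ ν, W ν = ∑ k ∈ Finset.Icc 1 ν,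
      (Nat.choose (ν + k - 1) (ν - k) : ℤ)) :
    (∀ ν, 1 ≤ ν → W ν = Nat.fib (2 * ν)) ∧
      W 1 = 1 ∧ W 2 = 3 ∧ ∀ ν, 2 < ν → W ν = 3 * W (ν - 1) - W (ν - 2) := by
  have hfib : ∀ ν, 1 ≤ ν → W ν = Nat.fib (2 * ν) := by
    intro ν hν
    rw [hW ν, ← key_sum_fib ν hν]
    push_cast
    rfl
  refine ⟨hfib, ?_, ?_, ?_⟩
  · rw [hfib 1 (by norm_num)]; rfl
  · rw [hfib 2 (by norm_num)]; rfl
  · intro ν hν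
    rw [hfib ν (by omega), hfib (ν - 1) (by omega), hfib (ν - 2) (by omega)]
    have h := fib_three_rec (2 * (ν - 2))
    rw [show 2 * (ν - 2) + 4 = 2 * ν by omega, show 2 * (ν - 2) + 2 = 2 * (ν - 1) by omega] at h
    exact h
end
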